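/- arXiv:1105.4150 — 7 statements merged into one kernel-verified Lean document; each statement's English description precedes it below -/
import Mathlib

section
/- Let A be a unital associative ℝ-algebra with involution, I a left ideal of A, and T a set of pairs (π, v) where π is a *-representation of A on a real inner product space, v is a vector in that space, and π(q)v = 0 for all q ∈ I. If I = {a ∈ A : π(a)v = 0 for every (π, v) ∈ T}, then I is a real left ideal. -/
/-!
For a representation point `(π, v)` vanishing on `I`, the adjoint relation gives
`⟪π(∑ aⱼ* aⱼ) v, v⟫ = ∑ ‖π(aⱼ) v‖²`, while for `u, w ∈ I` also
`⟪π(u + w*) v, v⟫ = ⟪π(u) v, v⟫ + ⟪v, π(w) v⟫ = 0`. Hence every `π(aⱼ) v` vanishes, and since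
`I` is the common annihilator of all representation points, every `aⱼ` lies in `I`.
-/

open scoped InnerProductSpace

section StarRepresentation

variable {A V : Type*} [Ring A] [StarRing A] [NormedAddCommGroup V] [InnerProductSpace ℝ V]

def IsStarRepresentation (π : A →+* Module.End ℝ V) : Prop :=
  ∀ (a : A) (u w : V), ⟪π a u, w⟫_ℝ = ⟪u, π (star a) w⟫_ℝ

variable {π : A →+* Module.End ℝ V}

theorem IsStarRepresentation.inner_apply_star_mul_self (hπ : IsStarRepresentation π)
    (a : A) (v : V) : ⟪π (star a * a) v, v⟫_ℝ = ‖π a v‖ ^ 2 := by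
  rw [map_mul, Module.End.mul_apply, hπ, star_star, real_inner_self_eq_norm_sq]

theorem IsStarRepresentation.inner_apply_add_star_eq_zero (hπ : IsStarRepresentation π)
    {u w : A} {v : V} (hu : π u v = 0) (hw : π w v = 0) : ⟪π (u + star w) v, v⟫_ℝ = 0 := by
  rw [map_add, LinearMap.add_apply, hu, zero_add, hπ, star_star, hw, inner_zero_right]

theorem IsStarRepresentation.apply_eq_zero_of_sum_star_mul_self_eq
    (hπ : IsStarRepresentation π) {ι : Type*} {s : Finset ι} {a : ι → A} {u w : A} {v : V}
    (hu : π u v = 0) (hw : π w v = 0) (h : ∑ j ∈ s, star (a j) * a j = u + star w) :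
    ∀ j ∈ s, π (a j) v = 0 := by
  have hsum : ∑ j ∈ s, ‖π (a j) v‖ ^ 2 = 0 :=
    calc ∑ j ∈ s, ‖π (a j) v‖ ^ 2 = ⟪π (∑ j ∈ s, star (a j) * a j) v, v⟫_ℝ := by
          simp only [map_sum, LinearMap.sum_apply, sum_inner, hπ.inner_apply_star_mul_self]
      _ = 0 := by rw [h, hπ.inner_apply_add_star_eq_zero hu hw]
  intro j hj
  have hj0 := (Finset.sum_eq_zero_iff_of_nonneg fun k _ => sq_nonneg ‖π (a k) v‖).mp hsum j hj
  exact norm_eq_zero.mp (pow_eq_zero_iff two_ne_zero |>.mp hj0)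

end StarRepresentation

theorem stmt2_general (A : Type) [Ring A] [Algebra ℝ A] [StarRing A]
    (I : Submodule A A)
    -- the family `T` of `*`-representation points `(π i, v i)`
    (ι : Type) (V : ι → Type)
    [∀ i, NormedAddCommGroup (V i)] [∀ i, InnerProductSpace ℝ (V i)]
    (π : ∀ i, A →ₐ[ℝ] (V i →ₗ[ℝ] V i)) (v : ∀ i, V i)
    (hrep : ∀ i (a : A) (u w : V i), (inner ℝ (π i a u) w : ℝ) = inner ℝ u (π i (star a) w))
    (hI : ∀ a : A, a ∈ I ↔ ∀ i, π i a (v i) = 0) :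
    ∀ (r : ℕ) (a : Fin r → A),
      (∃ u ∈ I, ∃ w ∈ I, (∑ j, star (a j) * a j) = u + star w) → ∀ j, a j ∈ I := by
  rintro r a ⟨u, hu, w, hw, hsum⟩ j
  refine (hI _).mpr fun i => ?_
  exact IsStarRepresentation.apply_eq_zero_of_sum_star_mul_self_eq (π := (π i).toRingHom)
    (hrep i) ((hI u).mp hu i) ((hI w).mp hw i) hsum j (Finset.mem_univ j)

/-- If a left ideal `I` of a unital `ℝ`-algebra with involution is the annihilator ideal
`𝒥(T)` of a family `T` of `*`-representation points vanishing on `I`, then `I` is a real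
left ideal: whenever `∑ aⱼ* aⱼ ∈ I + I*`, every `aⱼ ∈ I`. -/
theorem stmt2 (A : Type) [Ring A] [Algebra ℝ A] [StarRing A] [StarModule ℝ A]
    (I : Submodule A A)
    -- the family `T` of `*`-representation points `(π i, v i)`
    (ι : Type) (V : ι → Type)
    [∀ i, NormedAddCommGroup (V i)] [∀ i, InnerProductSpace ℝ (V i)]
    (π : ∀ i, A →ₐ[ℝ] (V i →ₗ[ℝ] V i)) (v : ∀ i, V i)
    (hrep : ∀ i (a : A) (u w : V i), (inner ℝ (π i a u) w : ℝ) = inner ℝ u (π i (star a) w))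
    (hT : ∀ i, ∀ q ∈ I, π i q (v i) = 0)
    (hI : ∀ a : A, a ∈ I ↔ ∀ i, π i a (v i) = 0) :
    ∀ (r : ℕ) (a : Fin r → A),
      (∃ u ∈ I, ∃ w ∈ I, (∑ j, star (a j) * a j) = u + star w) → ∀ j, a j ∈ I :=
  stmt2_general A I ι V π v hrep hI
end

section
/- Let I ⊆ 𝒜 = ℝ⟨x,x*⟩ be a left ideal generated by polynomials of degree ≤ d, and let G ⊆ 𝒜^H_d be a subspace such that 𝒜^H_d = I^ℓ_d ⊕ G (internal direct sum of subspaces). Then I ∩ 𝒜G = 𝒜I^ℓ_d ∩ 𝒜G = {0}. -/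
open Matrix

noncomputable section

/-- The free `*`-algebra `ℝ⟨x,x*⟩` on `g` variables: the free algebra on the `2g`
generators `x₁,…,x_g` (`Sum.inl`) and `x₁*,…,x_g*` (`Sum.inr`). -/
abbrev FA (g : ℕ) := FreeAlgebra ℝ (Fin g ⊕ Fin g)

/-- The involution on the free `*`-algebra: the unique `ℝ`-linear map reversing products
and interchanging `xᵢ` and `xᵢ*`, as a linear map. -/
def fstarL (g : ℕ) : FA g →ₗ[ℝ] FA g :=
  ((MulOpposite.opLinearEquiv ℝ).symm.toLinearMap).comp
    (FreeAlgebra.lift ℝ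
      (fun i : Fin g ⊕ Fin g => MulOpposite.op (FreeAlgebra.ι ℝ (Sum.swap i)))).toLinearMap

/-- The involution `p ↦ p*` on the free `*`-algebra. -/
def fstar {g : ℕ} (p : FA g) : FA g := fstarL g p

/-- A left ideal `I` is real if whenever `∑ᵢ aᵢ* aᵢ ∈ I + I*`, every `aᵢ ∈ I`. -/
def IsRealIdeal {g : ℕ} (I : Submodule (FA g) (FA g)) : Prop :=
  ∀ (r : ℕ) (a : Fin r → FA g),
    (∃ u ∈ I, ∃ w ∈ I, (∑ i, fstar (a i) * a i) = u + fstar w) → ∀ i, a i ∈ I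

/-- The real radical: the smallest real left ideal containing `I`. -/
def rr {g : ℕ} (I : Submodule (FA g) (FA g)) : Submodule (FA g) (FA g) :=
  sInf {J | IsRealIdeal J ∧ I ≤ J}

/-- The identification of the free algebra with the monoid algebra on words. -/
def toMA {g : ℕ} : FA g ≃ₐ[ℝ] MonoidAlgebra ℝ (FreeMonoid (Fin g ⊕ Fin g)) :=
  FreeAlgebra.equivMonoidAlgebraFreeMonoid

/-- `𝒜_d`: the subspace of polynomials of degree at most `d`. -/
def Adeg (g d : ℕ) : Submodule ℝ (FA g) :=
  (Finsupp.supported ℝ ℝ {w : FreeMonoid (Fin g ⊕ Fin g) | w.length ≤ d}).comap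
    ((MonoidAlgebra.coeffLinearEquiv ℝ).toLinearMap.comp (toMA (g := g)).toLinearMap)

/-- `𝒜^H_d`: the subspace of homogeneous polynomials of degree `d` (together with `0`). -/
def AdegH (g d : ℕ) : Submodule ℝ (FA g) :=
  (Finsupp.supported ℝ ℝ {w : FreeMonoid (Fin g ⊕ Fin g) | w.length = d}).comap
    ((MonoidAlgebra.coeffLinearEquiv ℝ).toLinearMap.comp (toMA (g := g)).toLinearMap)

/-- The degree of a polynomial: the maximal length of a word occurring in it
(`0` for the zero polynomial). -/
def deg {g : ℕ} (p : FA g) : ℕ :=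
  (toMA (g := g) p).coeff.support.sup FreeMonoid.length

/-- The leading polynomial: the homogeneous component of top degree. -/
def lead {g : ℕ} (p : FA g) : FA g :=
  (toMA (g := g)).symm (MonoidAlgebra.ofCoeff ((toMA (g := g) p).coeff.filter (fun w => FreeMonoid.length w = deg p)))

/-- `V^ℓ_d`: the span of leading polynomials of all degree-`d` elements of `V`. -/
def ellSet {g : ℕ} (V : Submodule ℝ (FA g)) (d : ℕ) : Submodule ℝ (FA g) :=
  Submodule.span ℝ {q | ∃ p ∈ V, p ≠ 0 ∧ deg p = d ∧ q = lead p}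

/-!
Work in the monoid algebra `ℝ[FreeMonoid _]` of words. For `U ⊆ 𝒜^H_d`, the degree-`(|w| + d)`
part of an element of `𝒜U`, read after the prefix `w`, lies in `U`; since every word of length
`≥ d` is uniquely `w t` with `|t| = d`, two disjoint `U, V ⊆ 𝒜^H_d` give `𝒜U ∩ 𝒜V = 0`.

Every element of `I = 𝒜S` is a sum of terms `w r` with `r ∈ I` of degree `≤ d`. If the terms of
top height `|w| + d` cancel, each of their `r` has degree `< d`, and moving the last letter of `w`
into `r` lowers the height. So an `f ∈ I` of degree `e ≥ d` has such a representation of height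
`e`, and its leading form lies in `𝒜 I^ℓ_d`. A nonzero element of `I ∩ 𝒜G` has degree `≥ d`, and
its leading form would be a nonzero element of `𝒜 I^ℓ_d ∩ 𝒜G`.
-/

open MonoidAlgebra
open scoped MonoidAlgebra

namespace FreeMonoid

variable {α : Type*}

theorem exists_eq_mul_length_eq (v : FreeMonoid α) {k : ℕ} (hk : k ≤ v.length) :
    ∃ w t : FreeMonoid α, v = w * t ∧ t.length = k := by
  refine ⟨ofList (v.toList.take (v.length - k)), ofList (v.toList.drop (v.length - k)), ?_, ?_⟩
  · apply toList.injective
    simp [toList_mul]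
  · change (v.toList.drop (v.length - k)).length = k
    rw [List.length_drop]
    exact Nat.sub_sub_self hk

theorem eq_of_mul_eq_mul_of_length_eq {w w' t t' : FreeMonoid α} (h : w * t = w' * t')
    (hl : w.length = w'.length) : w = w' :=
  toList.injective (List.append_inj (congrArg toList h) hl).1

end FreeMonoid

namespace FreeMonoidAlgebra

variable {R : Type*} [CommSemiring R] {α : Type*}

variable (R) in
def degreeLE (d : ℕ) : Submodule R R[FreeMonoid α] :=
  supported R R {w | w.length ≤ d}

variable (R) in
def homogeneousSubmodule (d : ℕ) : Submodule R R[FreeMonoid α] :=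
  supported R R {w | w.length = d}

def degree (x : R[FreeMonoid α]) : ℕ :=
  x.coeff.support.sup FreeMonoid.length

def homogeneousComponent (e : ℕ) : R[FreeMonoid α] →ₗ[R] R[FreeMonoid α] where
  toFun x := ofCoeff (x.coeff.filter fun w => w.length = e)
  map_add' _ _ := congrArg ofCoeff Finsupp.filter_add
  map_smul' _ _ := congrArg ofCoeff Finsupp.filter_smul

def leftQuotient (w : FreeMonoid α) : R[FreeMonoid α] →ₗ[R] R[FreeMonoid α] :=
  (coeffLinearEquiv R).symm.toLinearMap ∘ₗ
    Finsupp.lcomapDomain (w * ·) (fun _ _ => mul_left_cancel) ∘ₗ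
      (coeffLinearEquiv R).toLinearMap

theorem coeff_homogeneousComponent (e : ℕ) (x : R[FreeMonoid α]) (v : FreeMonoid α) :
    (homogeneousComponent e x).coeff v = if v.length = e then x.coeff v else 0 :=
  Finsupp.filter_apply _ _ _

theorem coeff_leftQuotient (w : FreeMonoid α) (x : R[FreeMonoid α]) (v : FreeMonoid α) :
    (leftQuotient w x).coeff v = x.coeff (w * v) :=
  rfl

theorem degree_le_iff {x : R[FreeMonoid α]} {d : ℕ} : degree x ≤ d ↔ x ∈ degreeLE R d :=
  Finset.sup_le_iff

theorem mem_degreeLE_degree (x : R[FreeMonoid α]) : x ∈ degreeLE R (degree x) :=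
  degree_le_iff.1 le_rfl

theorem homogeneousComponent_degree_ne_zero {x : R[FreeMonoid α]} (hx : x ≠ 0) :
    homogeneousComponent (degree x) x ≠ 0 := by
  obtain ⟨v, hv, hvx⟩ := Finset.exists_mem_eq_sup x.coeff.support
    (Finsupp.support_nonempty_iff.2 (by simpa using hx)) FreeMonoid.length
  intro h
  have := coeff_homogeneousComponent (degree x) x v
  rw [h, degree, ← hvx, if_pos rfl] at this
  exact Finsupp.mem_support_iff.1 hv this.symm

theorem homogeneousComponent_single (e : ℕ) (v : FreeMonoid α) (b : R) :
    homogeneousComponent e (single v b) = if v.length = e then single v b else 0 := by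
  ext u
  rw [coeff_homogeneousComponent]
  rcases eq_or_ne u v with rfl | huv
  · split_ifs <;> simp_all
  · split_ifs <;> simp [coeff_single, huv.symm]

theorem homogeneousComponent_single_mul (e : ℕ) (w : FreeMonoid α) (c : R)
    (x : R[FreeMonoid α]) :
    homogeneousComponent e (single w c * x) =
      if w.length ≤ e then single w c * homogeneousComponent (e - w.length) x else 0 := by
  induction x using MonoidAlgebra.induction_linear with
  | zero => simp
  | add x y hx hy => rw [mul_add, map_add, hx, hy]; split_ifs <;> simp [mul_add]
  | single v b =>
    rw [single_mul_single, homogeneousComponent_single, homogeneousComponent_single,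
      FreeMonoid.length_mul]
    split_ifs <;> first | rfl | (exfalso; omega) | simp

theorem homogeneousComponent_mem (e : ℕ) (x : R[FreeMonoid α]) :
    homogeneousComponent e x ∈ homogeneousSubmodule R e :=
  mem_supported'.2 fun v hv => by rw [coeff_homogeneousComponent]; exact if_neg hv

theorem homogeneousComponent_of_mem {d : ℕ} {x : R[FreeMonoid α]}
    (hx : x ∈ homogeneousSubmodule R d) (e : ℕ) :
    homogeneousComponent e x = if e = d then x else 0 := by
  ext v
  rw [coeff_homogeneousComponent]
  have := mem_supported'.1 hx v
  split_ifs <;> simp_all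

theorem homogeneousComponent_eq_zero_of_mem_degreeLE {d e : ℕ} {x : R[FreeMonoid α]}
    (hx : x ∈ degreeLE R d) (he : d < e) : homogeneousComponent e x = 0 := by
  ext v
  rw [coeff_homogeneousComponent]
  split_ifs with hv
  · exact mem_supported'.1 hx v (show ¬v.length ≤ d by omega)
  · rfl

theorem leftQuotient_single_mul_self (w : FreeMonoid α) (c : R) (x : R[FreeMonoid α]) :
    leftQuotient w (single w c * x) = c • x := by
  ext v
  rw [coeff_leftQuotient, coeff_single_mul_eq_mul_coeff v fun _ _ => mul_left_cancel_iff]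
  rfl

theorem leftQuotient_single_mul_of_ne {w w' : FreeMonoid α} (hw : w'.length = w.length)
    (hne : w' ≠ w) (c : R) (x : R[FreeMonoid α]) : leftQuotient w (single w' c * x) = 0 := by
  ext v
  rw [coeff_leftQuotient, coeff_single_mul_of_forall_mul_ne]
  · rfl
  · exact fun u huv => hne (FreeMonoid.eq_of_mul_eq_mul_of_length_eq huv hw)

theorem single_mul_mem_degreeLE_of_homogeneousComponent_eq_zero {d : ℕ} {r : R[FreeMonoid α]}
    (hr : r ∈ degreeLE R d) (h : homogeneousComponent d r = 0) {t : FreeMonoid α}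
    (ht : t.length = 1) (c : R) : single t c * r ∈ degreeLE R d := by
  classical
  intro v hv
  obtain ⟨u, hu, rfl⟩ := Finset.mem_image.1 (support_coeff_single_mul_subset r c t hv)
  have hud : u.length ≤ d := hr hu
  have hne : u.length ≠ d := fun hud' => by
    have := coeff_homogeneousComponent d r u
    rw [h, if_pos hud'] at this
    exact Finsupp.mem_support_iff.1 hu this.symm
  change (t * u).length ≤ d
  rw [FreeMonoid.length_mul]
  omega

theorem top_mul_le_of_single_mul_mem {U P : Submodule R R[FreeMonoid α]}
    (h : ∀ (w : FreeMonoid α) (c : R), ∀ u ∈ U, single w c * u ∈ P) : ⊤ * U ≤ P := by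
  rw [Submodule.mul_le]
  rintro a - u hu
  induction a using MonoidAlgebra.induction_linear with
  | zero => rw [zero_mul]; exact P.zero_mem
  | add a b ha hb => rw [add_mul]; exact P.add_mem ha hb
  | single w c => exact h w c u hu

section Homogeneous

variable {d : ℕ} {U V : Submodule R R[FreeMonoid α]}

theorem homogeneousComponent_single_mul_of_mem {u : R[FreeMonoid α]}
    (hu : u ∈ homogeneousSubmodule R d) (e : ℕ) (w : FreeMonoid α) (c : R) :
    homogeneousComponent e (single w c * u) =
      if w.length + d = e then single w c * u else 0 := by
  rw [homogeneousComponent_single_mul, homogeneousComponent_of_mem hu]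
  split_ifs <;> first | rfl | (exfalso; omega) | simp

theorem homogeneousComponent_mem_top_mul (hU : U ≤ homogeneousSubmodule R d) (e : ℕ)
    {x : R[FreeMonoid α]} (hx : x ∈ ⊤ * U) : homogeneousComponent e x ∈ ⊤ * U := by
  refine top_mul_le_of_single_mul_mem (P := (⊤ * U).comap (homogeneousComponent e))
    (fun w c u hu => ?_) hx
  rw [Submodule.mem_comap, homogeneousComponent_single_mul_of_mem (hU hu)]
  split_ifs
  · exact Submodule.mul_mem_mul Submodule.mem_top hu
  · exact zero_mem _

theorem homogeneousComponent_eq_zero_of_mem_top_mul (hU : U ≤ homogeneousSubmodule R d)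
    {e : ℕ} (he : e < d) {x : R[FreeMonoid α]} (hx : x ∈ ⊤ * U) :
    homogeneousComponent e x = 0 := by
  refine top_mul_le_of_single_mul_mem (P := (⊥ : Submodule R _).comap (homogeneousComponent e))
    (fun w c u hu => ?_) hx
  rw [Submodule.mem_comap, homogeneousComponent_single_mul_of_mem (hU hu), if_neg (by omega)]
  exact zero_mem _

theorem leftQuotient_homogeneousComponent_mem_of_mem_top_mul (hU : U ≤ homogeneousSubmodule R d)
    (w : FreeMonoid α) {x : R[FreeMonoid α]} (hx : x ∈ ⊤ * U) :
    leftQuotient w (homogeneousComponent (w.length + d) x) ∈ U := by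
  refine top_mul_le_of_single_mul_mem
    (P := U.comap (leftQuotient w ∘ₗ homogeneousComponent (w.length + d)))
    (fun w' c u hu => ?_) hx
  rw [Submodule.mem_comap, LinearMap.comp_apply, homogeneousComponent_single_mul_of_mem (hU hu)]
  split_ifs with hlen
  · by_cases hw : w' = w
    · rw [hw, leftQuotient_single_mul_self]
      exact U.smul_mem c hu
    · rw [leftQuotient_single_mul_of_ne (by omega) hw]
      exact zero_mem _
  · rw [map_zero]
    exact zero_mem _

theorem disjoint_top_mul (hU : U ≤ homogeneousSubmodule R d) (hV : V ≤ homogeneousSubmodule R d)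
    (hUV : Disjoint U V) : Disjoint (⊤ * U) (⊤ * V) := by
  refine Submodule.disjoint_def.2 fun x hxU hxV => ?_
  ext v
  rcases lt_or_ge v.length d with hv | hv
  · have := coeff_homogeneousComponent v.length x v
    rw [homogeneousComponent_eq_zero_of_mem_top_mul hU hv hxU, if_pos rfl] at this
    exact this.symm
  · obtain ⟨w, t, rfl, ht⟩ := v.exists_eq_mul_length_eq hv
    have h0 : leftQuotient w (homogeneousComponent (w.length + d) x) = 0 :=
      Submodule.disjoint_def.1 hUV _
        (leftQuotient_homogeneousComponent_mem_of_mem_top_mul hU w hxU)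
        (leftQuotient_homogeneousComponent_mem_of_mem_top_mul hV w hxV)
    have := congrArg (fun y => y.coeff t) h0
    simpa [coeff_leftQuotient, coeff_homogeneousComponent, FreeMonoid.length_mul, ht] using this

end Homogeneous

theorem leftQuotient_homogeneousComponent_single_mul_self {d e : ℕ} {w : FreeMonoid α}
    (hw : w.length + d = e) (x : R[FreeMonoid α]) :
    leftQuotient w (homogeneousComponent e (single w 1 * x)) = homogeneousComponent d x := by
  rw [homogeneousComponent_single_mul, if_pos (by omega), show e - w.length = d by omega,
    leftQuotient_single_mul_self, one_smul]

theorem leftQuotient_homogeneousComponent_single_mul_of_ne {d e : ℕ} {r : R[FreeMonoid α]}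
    (hr : r ∈ degreeLE R d) {w w' : FreeMonoid α} (hw : w.length + d = e)
    (hw' : w'.length + d ≤ e) (hne : w' ≠ w) (c : R) :
    leftQuotient w (homogeneousComponent e (single w' c * r)) = 0 := by
  rw [homogeneousComponent_single_mul, if_pos (by omega)]
  rcases hw'.lt_or_eq with hlt | heq
  · rw [homogeneousComponent_eq_zero_of_mem_degreeLE hr (by omega), mul_zero, map_zero]
  · exact leftQuotient_single_mul_of_ne (by omega) hne c _

section LeftIdeal

variable (J : Submodule R[FreeMonoid α] R[FreeMonoid α]) (d : ℕ)

/-- The paper's `J^ℓ_d`. -/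
def leadSpan : Submodule R R[FreeMonoid α] :=
  (J.restrictScalars R ⊓ degreeLE R d).map (homogeneousComponent d)

/-- Sums `∑ wᵢ rᵢ` with `rᵢ ∈ J` of degree `≤ d` and height `|wᵢ| + d ≤ m`. -/
def boundedCombinations (m : ℕ) : Submodule R R[FreeMonoid α] :=
  ⨆ w : {w : FreeMonoid α // w.length + d ≤ m},
    (J.restrictScalars R ⊓ degreeLE R d).map (LinearMap.mulLeft R (single (w : FreeMonoid α) 1))

variable {J d}

theorem leadSpan_le_homogeneousSubmodule : leadSpan J d ≤ homogeneousSubmodule R d :=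
  Submodule.map_le_iff_le_comap.2 fun x _ => homogeneousComponent_mem d x

theorem single_mul_mem_boundedCombinations {m : ℕ} {r : R[FreeMonoid α]}
    (hr : r ∈ J.restrictScalars R ⊓ degreeLE R d) {w : FreeMonoid α}
    (hw : w.length + d ≤ m) : single w 1 * r ∈ boundedCombinations J d m :=
  Submodule.mem_iSup_of_mem (⟨w, hw⟩ : {w : FreeMonoid α // w.length + d ≤ m})
    (Submodule.mem_map_of_mem hr)

theorem boundedCombinations_mono {m m' : ℕ} (h : m ≤ m') :
    boundedCombinations J d m ≤ boundedCombinations J d m' :=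
  iSup_le fun w => le_iSup_of_le (⟨w, w.2.trans h⟩ : {w : FreeMonoid α // w.length + d ≤ m'})
    le_rfl

theorem single_mul_mem_boundedCombinations_of_mem {m : ℕ} {x : R[FreeMonoid α]}
    (hx : x ∈ boundedCombinations J d m) (w : FreeMonoid α) (c : R) :
    single w c * x ∈ boundedCombinations J d (w.length + m) := by
  refine (iSup_le fun t => ?_ : boundedCombinations J d m ≤
    (boundedCombinations J d (w.length + m)).comap (LinearMap.mulLeft R (single w c))) hx
  rintro _ ⟨r, hr, rfl⟩
  have : single w c * (single (t : FreeMonoid α) 1 * r) = single (w * t) 1 * (c • r) := by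
    rw [← mul_assoc, single_mul_single, mul_one, mul_smul_comm, ← smul_mul_assoc,
      smul_single', mul_one]
  rw [Submodule.mem_comap, LinearMap.mulLeft_apply, LinearMap.mulLeft_apply, this]
  exact single_mul_mem_boundedCombinations (Submodule.smul_mem _ c hr)
    (by rw [FreeMonoid.length_mul]; have := t.2; omega)

theorem exists_mul_mem_boundedCombinations {m : ℕ} {x : R[FreeMonoid α]}
    (hx : x ∈ boundedCombinations J d m) (a : R[FreeMonoid α]) :
    ∃ m', a * x ∈ boundedCombinations J d m' := by
  induction a using MonoidAlgebra.induction_linear with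
  | zero => exact ⟨0, by rw [zero_mul]; exact zero_mem _⟩
  | add a b ha hb =>
    obtain ⟨m₁, h₁⟩ := ha
    obtain ⟨m₂, h₂⟩ := hb
    refine ⟨max m₁ m₂, ?_⟩
    rw [add_mul]
    exact add_mem (boundedCombinations_mono (le_max_left _ _) h₁)
      (boundedCombinations_mono (le_max_right _ _) h₂)
  | single w c => exact ⟨_, single_mul_mem_boundedCombinations_of_mem hx w c⟩

theorem exists_mem_boundedCombinations {S : Set R[FreeMonoid α]} (hSJ : S ⊆ J)
    (hS : ∀ s ∈ S, s ∈ degreeLE R d) {f : R[FreeMonoid α]}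
    (hf : f ∈ Submodule.span R[FreeMonoid α] S) : ∃ m, f ∈ boundedCombinations J d m := by
  induction hf using Submodule.span_induction with
  | mem s hs =>
    exact ⟨d, by simpa [← one_def] using
      single_mul_mem_boundedCombinations (J := J) ⟨hSJ hs, hS s hs⟩ (w := 1) (by simp)⟩
  | zero => exact ⟨0, zero_mem _⟩
  | add x y _ _ hx hy =>
    obtain ⟨m₁, h₁⟩ := hx
    obtain ⟨m₂, h₂⟩ := hy
    exact ⟨max m₁ m₂, add_mem (boundedCombinations_mono (le_max_left _ _) h₁)
      (boundedCombinations_mono (le_max_right _ _) h₂)⟩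
  | smul a x _ hx =>
    obtain ⟨m, hm⟩ := hx
    exact exists_mul_mem_boundedCombinations hm a

theorem mem_boundedCombinations_of_homogeneousComponent_eq_zero {m : ℕ} {f : R[FreeMonoid α]}
    (hdm : d ≤ m) (hf : f ∈ boundedCombinations J d (m + 1))
    (h0 : homogeneousComponent (m + 1) f = 0) : f ∈ boundedCombinations J d m := by
  obtain ⟨F, hF, rfl⟩ := (Submodule.mem_iSup_iff_exists_finsupp _ _).1 hf
  choose r hr hFr using fun i => Submodule.mem_map.1 (hF i)
  simp only [LinearMap.mulLeft_apply] at hFr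
  refine Submodule.finsuppSum_mem _ _ _ _ fun i _ => ?_
  rw [← hFr i]
  rcases i.2.lt_or_eq with hi | hi
  · exact single_mul_mem_boundedCombinations (hr i) (by omega)
  -- `leftQuotient i` isolates the term of index `i` in the vanishing top-degree component.
  have hlead : homogeneousComponent d (r i) = 0 := by
    have := congrArg (leftQuotient (i : FreeMonoid α)) h0
    rw [map_zero, map_finsuppSum, map_finsuppSum, Finsupp.sum_eq_single i] at this
    · rwa [← hFr i, leftQuotient_homogeneousComponent_single_mul_self hi] at this
    · intro j _ hji
      rw [← hFr j]
      exact leftQuotient_homogeneousComponent_single_mul_of_ne (hr j).2 hi j.2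
        (fun h => hji (Subtype.ext h)) 1
    · intro _
      rw [map_zero, map_zero]
  obtain ⟨w, t, hwt, ht⟩ := (i : FreeMonoid α).exists_eq_mul_length_eq (k := 1) (by omega)
  rw [hwt, ← mul_one (1 : R), ← single_mul_single, mul_assoc]
  refine single_mul_mem_boundedCombinations
    ⟨J.smul_mem (single t 1) (hr i).1,
      single_mul_mem_degreeLE_of_homogeneousComponent_eq_zero (hr i).2 hlead ht 1⟩ ?_
  have := congrArg FreeMonoid.length hwt
  rw [FreeMonoid.length_mul] at this
  omega

theorem mem_boundedCombinations_of_mem_degreeLE {e : ℕ} {f : R[FreeMonoid α]} (hde : d ≤ e)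
    (hfe : f ∈ degreeLE R e) (k : ℕ) (hf : f ∈ boundedCombinations J d (e + k)) :
    f ∈ boundedCombinations J d e := by
  induction k with
  | zero => exact hf
  | succ k ih =>
    exact ih (mem_boundedCombinations_of_homogeneousComponent_eq_zero (by omega) hf
      (homogeneousComponent_eq_zero_of_mem_degreeLE hfe (by omega)))

theorem homogeneousComponent_mem_top_mul_leadSpan_of_mem {e : ℕ} {f : R[FreeMonoid α]}
    (hf : f ∈ boundedCombinations J d e) : homogeneousComponent e f ∈ ⊤ * leadSpan J d := by
  refine (iSup_le fun w => ?_ :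
    boundedCombinations J d e ≤ (⊤ * leadSpan J d).comap (homogeneousComponent e)) hf
  rintro _ ⟨r, hr, rfl⟩
  rw [Submodule.mem_comap, LinearMap.mulLeft_apply, homogeneousComponent_single_mul,
    if_pos (by omega)]
  rcases w.2.lt_or_eq with h | h
  · rw [homogeneousComponent_eq_zero_of_mem_degreeLE hr.2 (by omega), mul_zero]
    exact zero_mem _
  · rw [show e - (w : FreeMonoid α).length = d by omega]
    exact Submodule.mul_mem_mul Submodule.mem_top (Submodule.mem_map_of_mem hr)

theorem homogeneousComponent_mem_top_mul_leadSpan {S : Set R[FreeMonoid α]}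
    (hS : ∀ s ∈ S, s ∈ degreeLE R d) {f : R[FreeMonoid α]}
    (hf : f ∈ Submodule.span R[FreeMonoid α] S) {e : ℕ} (hde : d ≤ e)
    (hfe : f ∈ degreeLE R e) :
    homogeneousComponent e f ∈ ⊤ * leadSpan (Submodule.span R[FreeMonoid α] S) d := by
  obtain ⟨m, hm⟩ := exists_mem_boundedCombinations Submodule.subset_span hS hf
  exact homogeneousComponent_mem_top_mul_leadSpan_of_mem <|
    mem_boundedCombinations_of_mem_degreeLE hde hfe (m - e)
      (boundedCombinations_mono (by omega) hm)

theorem disjoint_span_top_mul {S : Set R[FreeMonoid α]} (hS : ∀ s ∈ S, s ∈ degreeLE R d)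
    {V : Submodule R R[FreeMonoid α]} (hV : V ≤ homogeneousSubmodule R d)
    (hdisj : Disjoint (leadSpan (Submodule.span R[FreeMonoid α] S) d) V) :
    Disjoint ((Submodule.span R[FreeMonoid α] S).restrictScalars R) (⊤ * V) := by
  refine Submodule.disjoint_def.2 fun x hxJ hxV => ?_
  by_contra hx
  have hd : d ≤ degree x := le_of_not_gt fun h =>
    homogeneousComponent_degree_ne_zero hx (homogeneousComponent_eq_zero_of_mem_top_mul hV h hxV)
  exact homogeneousComponent_degree_ne_zero hx <|
    Submodule.disjoint_def.1 (disjoint_top_mul leadSpan_le_homogeneousSubmodule hV hdisj) _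
      (homogeneousComponent_mem_top_mul_leadSpan hS hxJ hd (mem_degreeLE_degree x))
      (homogeneousComponent_mem_top_mul hV _ hxV)

end LeftIdeal

end FreeMonoidAlgebra

open FreeMonoidAlgebra

theorem Submodule.disjoint_of_disjoint_map {R M N : Type*} [Semiring R] [AddCommMonoid M]
    [AddCommMonoid N] [Module R M] [Module R N] {f : M →ₗ[R] N} (hf : Function.Injective f)
    {p q : Submodule R M} (h : Disjoint (p.map f) (q.map f)) : Disjoint p q :=
  Submodule.disjoint_def.2 fun x hp hq => hf <| by
    rw [map_zero]
    exact Submodule.disjoint_def.1 h _ (Submodule.mem_map_of_mem hp) (Submodule.mem_map_of_mem hq)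

section AlgEquiv

variable {R A B : Type*} [CommSemiring R] [Semiring A] [Semiring B] [Algebra R A] [Algebra R B]
  (e : A ≃ₐ[R] B)

theorem AlgEquiv.map_restrictScalars_span (S : Set A) :
    ((Submodule.span A S).restrictScalars R).map e.toLinearMap =
      (Submodule.span B (e '' S)).restrictScalars R := by
  ext y
  rw [Submodule.restrictScalars_mem,
    show e '' S = (e.toRingEquiv : A →+* B).toSemilinearMap '' S from rfl, ← Submodule.map_span]
  rfl

theorem AlgEquiv.map_top_mul (X : Submodule R A) :
    (⊤ * X).map e.toLinearMap = ⊤ * X.map e.toLinearMap := by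
  have := Submodule.map_mul ⊤ X e.toAlgHom
  rwa [Submodule.map_top, LinearMap.range_eq_top.2 e.surjective] at this

end AlgEquiv

section FreeStarAlgebra

variable {g : ℕ}

theorem toMA_lead (p : FA g) : toMA (lead p) = homogeneousComponent (deg p) (toMA p) := by
  rw [lead, AlgEquiv.apply_symm_apply]
  rfl

theorem map_toMA_ellSet {V : Submodule ℝ (FA g)}
    {J : Submodule ℝ[FreeMonoid (Fin g ⊕ Fin g)] ℝ[FreeMonoid (Fin g ⊕ Fin g)]}
    (hVJ : V.map toMA.toLinearMap = J.restrictScalars ℝ) (d : ℕ) :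
    (ellSet V d).map toMA.toLinearMap = leadSpan J d := by
  rw [ellSet, Submodule.map_span]
  apply le_antisymm
  · rw [Submodule.span_le]
    rintro _ ⟨_, ⟨p, hp, -, hpd, rfl⟩, rfl⟩
    refine ⟨toMA p, ⟨hVJ ▸ Submodule.mem_map_of_mem hp, degree_le_iff.1 hpd.le⟩, ?_⟩
    rw [← hpd]
    exact (toMA_lead p).symm
  · rintro _ ⟨r, ⟨hrJ, hrd⟩, rfl⟩
    obtain ⟨p, hp, rfl⟩ : r ∈ V.map toMA.toLinearMap := hVJ ▸ hrJ
    rcases (degree_le_iff.2 hrd).lt_or_eq with hlt | heq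
    · rw [homogeneousComponent_eq_zero_of_mem_degreeLE (mem_degreeLE_degree _) hlt]
      exact zero_mem _
    · by_cases hp0 : p = 0
      · rw [hp0, map_zero, map_zero]
        exact zero_mem _
      · exact Submodule.subset_span ⟨lead p, ⟨p, hp, hp0, heq, rfl⟩, heq ▸ toMA_lead p⟩

end FreeStarAlgebra

theorem stmt7_general (g d : ℕ) (S : Set (FA g)) (hSdeg : ∀ s ∈ S, s ∈ Adeg g d)
    (I : Submodule (FA g) (FA g)) (hI : I = Submodule.span (FA g) S)
    (G : Submodule ℝ (FA g)) (hG : G ≤ AdegH g d)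
    (hdisj : Disjoint (ellSet (I.restrictScalars ℝ) d) G) :
    I.restrictScalars ℝ ⊓ (⊤ * G) = ⊥ ∧
      (⊤ * ellSet (I.restrictScalars ℝ) d) ⊓ (⊤ * G) = ⊥ := by
  set J := Submodule.span ℝ[FreeMonoid (Fin g ⊕ Fin g)] (toMA '' S)
  have hIJ : (I.restrictScalars ℝ).map toMA.toLinearMap = J.restrictScalars ℝ :=
    hI ▸ toMA.map_restrictScalars_span S
  have hell := map_toMA_ellSet hIJ d
  have hS : ∀ s ∈ toMA '' S, s ∈ degreeLE ℝ d := by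
    rintro _ ⟨s, hs, rfl⟩
    exact hSdeg s hs
  have hG' : G.map toMA.toLinearMap ≤ homogeneousSubmodule ℝ d :=
    Submodule.map_le_iff_le_comap.2 hG
  have hdisj' : Disjoint (leadSpan J d) (G.map toMA.toLinearMap) :=
    hell ▸ Submodule.disjoint_map toMA.injective hdisj
  constructor
  · refine disjoint_iff.1 (Submodule.disjoint_of_disjoint_map (f := toMA.toLinearMap)
      toMA.injective ?_)
    rw [hIJ, toMA.map_top_mul]
    exact disjoint_span_top_mul hS hG' hdisj'
  · refine disjoint_iff.1 (Submodule.disjoint_of_disjoint_map (f := toMA.toLinearMap)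
      toMA.injective ?_)
    rw [toMA.map_top_mul, toMA.map_top_mul, hell]
    exact disjoint_top_mul leadSpan_le_homogeneousSubmodule hG' hdisj'

/-- If `I` is a left ideal generated by polynomials of degree `≤ d` and
`𝒜^H_d = I^ℓ_d ⊕ G`, then `I ∩ 𝒜G = 𝒜I^ℓ_d ∩ 𝒜G = {0}`. -/
theorem stmt7 (g d : ℕ) (S : Set (FA g)) (hSdeg : ∀ s ∈ S, s ∈ Adeg g d)
    (I : Submodule (FA g) (FA g)) (hI : I = Submodule.span (FA g) S)
    (G : Submodule ℝ (FA g)) (hG : G ≤ AdegH g d)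
    (hdisj : Disjoint (ellSet (I.restrictScalars ℝ) d) G)
    (hsum : ellSet (I.restrictScalars ℝ) d ⊔ G = AdegH g d) :
    I.restrictScalars ℝ ⊓ (⊤ * G) = ⊥ ∧
      (⊤ * ellSet (I.restrictScalars ℝ) d) ⊓ (⊤ * G) = ⊥ :=
  stmt7_general g d S hSdeg I hI G hG hdisj
end
end

section
/- Let A be a unital associative ℝ-algebra with involution, I a left ideal of A, and a ∈ A. Then the following are equivalent: (i) π(a)v = 0 for every *-representation π of A on a real inner product space and every vector v in that space with π(u)v = 0 for all u ∈ I; (ii) for every ℝ-linear functional f : A → ℝ with f(b*) = f(b) for all b ∈ A, f(s) ≥ 0 for all s ∈ Σ_A, and f(u*u) = 0 for all u ∈ I, one has f(a*a) = 0. (This is the double-dual form of the statement that the set in (i) equals {a ∈ A : −a*a lies in the closure of Σ_A − Σ_I in the finest locally convex topology on A_h}, where Σ_I is the set of finite sums of u*u with u ∈ I.) -/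
/-!
(i) ⇒ (ii) is the GNS construction: a hermitian functional `f` that is nonnegative on squares
satisfies Cauchy–Schwarz, so `{x | ∀ y, f (y* x) = 0}` is a left ideal and `f (x* y)` is an inner
product on the quotient of `A` by it. Left multiplication is a `*`-representation `π` there, and
`f (b) = ⟨v, π(b) v⟩` for the class `v` of `1`. Since `⟨v, π(u* u) v⟩ = ‖π(u) v‖²`, the
conditions on `f` in (ii) become the conditions on `(π, v)` in (i); conversely (ii) applies to the
vector functional of any `(π, v)` as in (i).
-/

open scoped InnerProductSpace

universe u

section VectorFunctional

variable {A : Type*} [Ring A] [Algebra ℝ A]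
  {V : Type*} [NormedAddCommGroup V] [InnerProductSpace ℝ V]

noncomputable def vectorFunctional (π : A →ₐ[ℝ] Module.End ℝ V) (v : V) : A →ₗ[ℝ] ℝ :=
  innerₛₗ ℝ v ∘ₗ LinearMap.applyₗ v ∘ₗ π.toLinearMap

@[simp]
theorem vectorFunctional_apply (π : A →ₐ[ℝ] Module.End ℝ V) (v : V) (b : A) :
    vectorFunctional π v b = ⟪v, π b v⟫_ℝ :=
  rfl

variable [StarRing A] {π : A →ₐ[ℝ] Module.End ℝ V}

theorem vectorFunctional_star
    (hπ : ∀ (b : A) (u w : V), ⟪π b u, w⟫_ℝ = ⟪u, π (star b) w⟫_ℝ) (v : V) (b : A) :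
    vectorFunctional π v (star b) = vectorFunctional π v b := by
  rw [vectorFunctional_apply, vectorFunctional_apply, ← hπ, real_inner_comm]

theorem vectorFunctional_star_mul_self
    (hπ : ∀ (b : A) (u w : V), ⟪π b u, w⟫_ℝ = ⟪u, π (star b) w⟫_ℝ) (v : V) (b : A) :
    vectorFunctional π v (star b * b) = ‖π b v‖ ^ 2 := by
  rw [vectorFunctional_apply, map_mul, Module.End.mul_apply, ← hπ, real_inner_self_eq_norm_sq]

end VectorFunctional

section PositiveFunctional

variable {A : Type u} [Ring A] [Algebra ℝ A] [StarRing A] {f : A →ₗ[ℝ] ℝ}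

theorem apply_star_mul_comm (hf : ∀ b, f (star b) = f b) (x y : A) :
    f (star x * y) = f (star y * x) := by
  rw [← hf, star_mul, star_star]

theorem apply_star_mul_sq_le [StarModule ℝ A] (hf : ∀ b, f (star b) = f b)
    (hpos : ∀ x, 0 ≤ f (star x * x)) (x y : A) :
    f (star x * y) ^ 2 ≤ f (star x * x) * f (star y * y) := by
  have h := discrim_le_zero (a := f (star y * y)) (b := 2 * f (star x * y))
    (c := f (star x * x)) fun t => by
    have := hpos (x + t • y)
    simp only [star_add, star_smul, star_trivial, add_mul, mul_add, smul_mul_assoc,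
      mul_smul_comm, map_add, map_smul, smul_eq_mul, apply_star_mul_comm hf y x] at this
    linarith
  rw [discrim] at h
  nlinarith

variable (f) in
def gnsNullIdeal : Submodule A A where
  carrier := {x | ∀ y, f (star y * x) = 0}
  add_mem' hx hy y := by simp [mul_add, hx y, hy y]
  zero_mem' y := by simp
  smul_mem' b x hx y := by rw [smul_eq_mul, ← mul_assoc, ← star_star b, ← star_mul]; exact hx _

theorem mem_gnsNullIdeal_iff [StarModule ℝ A] (hf : ∀ b, f (star b) = f b)
    (hpos : ∀ x, 0 ≤ f (star x * x)) {x : A} :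
    x ∈ gnsNullIdeal f ↔ f (star x * x) = 0 := by
  refine ⟨fun hx => hx x, fun hx y => pow_eq_zero_iff two_ne_zero |>.mp ?_⟩
  have := apply_star_mul_sq_le hf hpos y x
  rw [hx, mul_zero] at this
  exact le_antisymm this (sq_nonneg _)

abbrev gnsCore [StarModule ℝ A] (hf : ∀ b, f (star b) = f b)
    (hpos : ∀ x, 0 ≤ f (star x * x)) : InnerProductSpace.Core ℝ (A ⧸ gnsNullIdeal f) where
  inner := Quotient.lift₂ (fun x y => f (star x * y)) fun x y x' y' hx hy => by
    have hx : ∀ z, f (star z * (x - x')) = 0 := (Submodule.quotientRel_def _).1 hx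
    have hy : ∀ z, f (star z * (y - y')) = 0 := (Submodule.quotientRel_def _).1 hy
    have h := apply_star_mul_comm hf (x - x') y ▸ hx y
    simp only [star_sub, sub_mul, mul_sub, map_sub] at h hy
    linarith [hy x']
  conj_inner_symm u w := by
    induction u using Submodule.Quotient.induction_on
    induction w using Submodule.Quotient.induction_on
    exact apply_star_mul_comm hf _ _
  re_inner_nonneg u := by
    induction u using Submodule.Quotient.induction_on
    exact hpos _
  add_left u w z := by
    induction u using Submodule.Quotient.induction_on
    induction w using Submodule.Quotient.induction_on
    induction z using Submodule.Quotient.induction_on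
    exact (congrArg f (by rw [star_add, add_mul])).trans (map_add f _ _)
  smul_left u w r := by
    induction u using Submodule.Quotient.induction_on
    induction w using Submodule.Quotient.induction_on
    exact (congrArg f (by rw [star_smul, star_trivial, smul_mul_assoc, conj_trivial])).trans
      (map_smul f _ _)
  definite u h := by
    induction u using Submodule.Quotient.induction_on
    exact (Submodule.Quotient.mk_eq_zero _).2 ((mem_gnsNullIdeal_iff hf hpos).2 h)

theorem exists_starRepresentation_eq_vectorFunctional [StarModule ℝ A]
    (hf : ∀ b, f (star b) = f b) (hpos : ∀ x, 0 ≤ f (star x * x)) :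
    ∃ (V : Type u) (_ : NormedAddCommGroup V) (_ : InnerProductSpace ℝ V)
      (π : A →ₐ[ℝ] Module.End ℝ V) (v : V),
      (∀ (b : A) (u w : V), ⟪π b u, w⟫_ℝ = ⟪u, π (star b) w⟫_ℝ) ∧ f = vectorFunctional π v := by
  let _ := (gnsCore hf hpos).toNormedAddCommGroup
  let _ := InnerProductSpace.ofCore (gnsCore hf hpos).toCore
  refine ⟨A ⧸ gnsNullIdeal f, _, _, Algebra.lsmul ℝ ℝ _, Submodule.Quotient.mk 1, ?_, ?_⟩
  · intro b u w
    induction u using Submodule.Quotient.induction_on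
    induction w using Submodule.Quotient.induction_on
    exact congrArg f (by simp only [smul_eq_mul, star_mul, mul_assoc])
  · ext b
    exact congrArg f (by simp)

end PositiveFunctional

/-- For a left ideal `I` of a unital `ℝ`-algebra with involution and `a ∈ A`, membership of
`a` in `√R(I)` (vanishing at every `*`-representation point annihilating `I`) is equivalent
to the vanishing of `f(a*a)` for every positive hermitian linear functional `f` that kills
`Σ_I`; this is the double-dual form of `√R(I) = {a : −a*a ∈ closure (Σ_A − Σ_I)}`. -/
theorem stmt14 (A : Type) [Ring A] [Algebra ℝ A] [StarRing A] [StarModule ℝ A]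
    (I : Submodule A A) (a : A) :
    (∀ (V : Type) [NormedAddCommGroup V] [InnerProductSpace ℝ V],
      ∀ (π : A →ₐ[ℝ] (V →ₗ[ℝ] V)),
        (∀ (b : A) (u w : V), (inner ℝ (π b u) w : ℝ) = inner ℝ u (π (star b) w)) →
        ∀ v : V, (∀ u ∈ I, π u v = 0) → π a v = 0)
    ↔
    (∀ f : A →ₗ[ℝ] ℝ,
      (∀ b : A, f (star b) = f b) →
      (∀ (r : ℕ) (b : Fin r → A), 0 ≤ f (∑ i, star (b i) * b i)) →
      (∀ u ∈ I, f (star u * u) = 0) →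
      f (star a * a) = 0) := by
  constructor
  · intro h f hf hpos hI
    obtain ⟨V, _, _, π, v, hπ, rfl⟩ :=
      exists_starRepresentation_eq_vectorFunctional hf fun x => by simpa using hpos 1 fun _ => x
    have hsq := vectorFunctional_star_mul_self hπ v
    have hv : ∀ u ∈ I, π u v = 0 := fun u hu => by simpa [hsq] using hI u hu
    simp [hsq, h V π hπ v hv]
  · intro h V _ _ π hπ v hv
    have hsq := vectorFunctional_star_mul_self hπ v
    have hpos : ∀ (r : ℕ) (b : Fin r → A), 0 ≤ vectorFunctional π v (∑ i, star (b i) * b i) :=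
      fun r b => by simp only [map_sum, hsq]; positivity
    have hI : ∀ u ∈ I, vectorFunctional π v (star u * u) = 0 := fun u hu => by simp [hsq, hv u hu]
    simpa [hsq] using h _ (vectorFunctional_star hπ v) hpos hI
end

section
/- Let A be a unital associative ℝ-algebra with involution, let {p_λ}_{λ∈Λ} ⊆ A, and let I be the left ideal of A generated by {p_λ}. Set S = {p_λ* p_λ : λ ∈ Λ}, let cone(S) be the set of finite sums of nonnegative real multiples of elements of S, and let Σ_I be the set of finite sums of u*u with u ∈ I. Then: (1) Σ_A − cone(S) ⊆ Σ_A − Σ_I ⊆ Σ_A + (I ∩ A_h) ⊆ (Σ_A + I + I*) ∩ A_h; and (2) every ℝ-linear functional f : A → ℝ with f(b*) = f(b) for all b ∈ A and f ≥ 0 on Σ_A − cone(S) satisfies f ≥ 0 on (Σ_A + I + I*) ∩ A_h. (Statement (2) is the dual form of the assertion that all four sets in (1) have the same closure in the finest locally convex topology on A_h.) -/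
/-!
If a hermitian functional `f` is nonnegative on `Σ_A − cone(S)`, it is nonnegative on `Σ_A` and
`f(p* p) = 0` for every generator `p`. The positive semidefinite form `(a, b) ↦ f(b* a)` then
forces `f(a p) = 0` for all `a` (a Cauchy–Schwarz argument), so `f` vanishes on the left ideal `I`
and on `I*`, and only the `Σ_A` part of an element of `Σ_A + I + I*` contributes.
-/

noncomputable section

/-- `Σ_A`: the set of finite sums of elements `a*a`. -/
def SigmaSet (A : Type) [Ring A] [StarRing A] : Set A :=
  {s | ∃ (r : ℕ) (b : Fin r → A), s = ∑ i, star (b i) * b i}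

namespace SigmaSet

variable {A : Type} [Ring A] [StarRing A]

lemma star_eq {s : A} (hs : s ∈ SigmaSet A) : star s = s := by
  obtain ⟨r, b, rfl⟩ := hs
  simp only [star_sum, star_mul, star_star]

lemma zero_mem : (0 : A) ∈ SigmaSet A :=
  ⟨0, Fin.elim0, by simp⟩

lemma star_mul_self_mem (a : A) : star a * a ∈ SigmaSet A :=
  ⟨1, fun _ => a, by simp⟩

end SigmaSet

lemma sum_star_mul_self_mem {A : Type} [Ring A] [StarRing A] {I : Submodule A A} {r : ℕ}
    {u : Fin r → A} (hu : ∀ i, u i ∈ I) : ∑ i, star (u i) * u i ∈ I :=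
  Submodule.sum_mem _ fun i _ => I.smul_mem (star (u i)) (hu i)

def leftKernel {A M F : Type} [Ring A] [AddCommMonoid M] [FunLike F A M]
    [AddMonoidHomClass F A M] (f : F) : Submodule A A where
  carrier := {v | ∀ a, f (a * v) = 0}
  add_mem' hv hw a := by simp only [mul_add, map_add, hv a, hw a, add_zero]
  zero_mem' a := by simp
  smul_mem' c v hv a := by simpa only [smul_eq_mul, mul_assoc] using hv (a * c)

section HermitianFunctional

variable {A : Type} [Ring A] [Algebra ℝ A] [StarRing A] [StarModule ℝ A]
  {f : A →ₗ[ℝ] ℝ}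

lemma map_star_mul_self_add_smul (hf : ∀ b, f (star b) = f b) (a p : A) (t : ℝ) :
    f (star (star a + t • p) * (star a + t • p)) =
      f (a * star a) + 2 * t * f (a * p) + t ^ 2 * f (star p * p) := by
  have hsymm : f (star p * star a) = f (a * p) := by rw [← star_mul, hf]
  simp only [star_add, star_smul, star_star, star_trivial, add_mul, mul_add, smul_mul_assoc,
    mul_smul_comm, map_add, map_smul, smul_eq_mul, hsymm]
  ring

/-- The quadratic `t ↦ f((a* + t p)*(a* + t p))` has leading coefficient `f(p* p) = 0` and is
nonnegative, so its linear coefficient `2 f(a p)` vanishes. -/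
lemma map_mul_eq_zero_of_map_star_mul_self_eq_zero (hf : ∀ b, f (star b) = f b)
    (hpos : ∀ a, 0 ≤ f (star a * a)) {p : A} (hp : f (star p * p) = 0) (a : A) :
    f (a * p) = 0 := by
  by_contra hne
  set t : ℝ := -(f (a * star a) + 1) / (2 * f (a * p))
  have hslope : 2 * t * f (a * p) = -(f (a * star a) + 1) := by
    simp only [t]
    field_simp
  have := hpos (star a + t • p)
  rw [map_star_mul_self_add_smul hf, hp, hslope] at this
  linarith

lemma map_eq_zero_of_mem_span (hf : ∀ b, f (star b) = f b) (hpos : ∀ a, 0 ≤ f (star a * a))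
    {Λ : Type} {p : Λ → A} (hp : ∀ l, f (star (p l) * p l) = 0)
    {v : A} (hv : v ∈ Submodule.span A (Set.range p)) : f v = 0 := by
  have hle : Submodule.span A (Set.range p) ≤ leftKernel f := by
    rw [Submodule.span_le]
    rintro _ ⟨l, rfl⟩
    exact map_mul_eq_zero_of_map_star_mul_self_eq_zero hf hpos (hp l)
  simpa using hle hv 1

end HermitianFunctional

/-- Chain of inclusions `Σ_A − cone(S) ⊆ Σ_A − Σ_I ⊆ Σ_A + (I ∩ A_h) ⊆ (Σ_A + I + I*) ∩ A_h`
for the left ideal `I` generated by `{p_λ}`, `S = {p_λ* p_λ}`; and its dual consequence: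
these four sets have the same closure, i.e. every hermitian linear functional nonnegative on
the first set is nonnegative on the last one. -/
theorem stmt15 (A : Type) [Ring A] [Algebra ℝ A] [StarRing A] [StarModule ℝ A]
    (Λ : Type) (p : Λ → A)
    (I : Submodule A A) (hI : I = Submodule.span A (Set.range p)) :
    ({x : A | ∃ s ∈ SigmaSet A,
        ∃ t ∈ {t : A | ∃ (r : ℕ) (c : Fin r → ℝ) (l : Fin r → Λ),
          (∀ i, 0 ≤ c i) ∧ t = ∑ i, c i • (star (p (l i)) * p (l i))},
        x = s - t} ⊆
      {x : A | ∃ s ∈ SigmaSet A,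
        ∃ t ∈ {t : A | ∃ (r : ℕ) (u : Fin r → A), (∀ i, u i ∈ I) ∧
          t = ∑ i, star (u i) * u i},
        x = s - t}) ∧
    ({x : A | ∃ s ∈ SigmaSet A,
        ∃ t ∈ {t : A | ∃ (r : ℕ) (u : Fin r → A), (∀ i, u i ∈ I) ∧
          t = ∑ i, star (u i) * u i},
        x = s - t} ⊆
      {x : A | ∃ s ∈ SigmaSet A, ∃ u ∈ I, star u = u ∧ x = s + u}) ∧
    ({x : A | ∃ s ∈ SigmaSet A, ∃ u ∈ I, star u = u ∧ x = s + u} ⊆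
      {x : A | star x = x ∧ ∃ s ∈ SigmaSet A, ∃ u ∈ I, ∃ w ∈ I, x = s + u + star w}) ∧
    (∀ f : A →ₗ[ℝ] ℝ, (∀ b : A, f (star b) = f b) →
      (∀ x ∈ {x : A | ∃ s ∈ SigmaSet A,
          ∃ t ∈ {t : A | ∃ (r : ℕ) (c : Fin r → ℝ) (l : Fin r → Λ),
            (∀ i, 0 ≤ c i) ∧ t = ∑ i, c i • (star (p (l i)) * p (l i))},
          x = s - t}, 0 ≤ f x) →
      ∀ x ∈ {x : A | star x = x ∧
          ∃ s ∈ SigmaSet A, ∃ u ∈ I, ∃ w ∈ I, x = s + u + star w},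
        0 ≤ f x) := by
  subst hI
  refine ⟨?_, ?_, ?_, ?_⟩
  · rintro x ⟨s, hs, t, ⟨r, c, l, hc, rfl⟩, rfl⟩
    refine ⟨s, hs, _, ⟨r, fun i => Real.sqrt (c i) • p (l i), fun i => ?_, ?_⟩, rfl⟩
    · exact Submodule.smul_of_tower_mem _ _ (Submodule.subset_span ⟨l i, rfl⟩)
    · simp only [star_smul, star_trivial, smul_mul_smul_comm, Real.mul_self_sqrt (hc _)]
  · rintro x ⟨s, hs, t, ⟨r, u, hu, rfl⟩, rfl⟩
    refine ⟨s, hs, _, neg_mem (sum_star_mul_self_mem hu), ?_, sub_eq_add_neg _ _⟩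
    rw [star_neg, SigmaSet.star_eq ⟨r, u, rfl⟩]
  · rintro x ⟨s, hs, u, hu, hustar, rfl⟩
    refine ⟨?_, s, hs, u, hu, 0, zero_mem _, by simp⟩
    rw [star_add, SigmaSet.star_eq hs, hustar]
  · rintro f hf hnonneg x ⟨-, s, hs, u, hu, w, hw, rfl⟩
    have hsigma (s : A) (hs : s ∈ SigmaSet A) : 0 ≤ f s := by
      simpa using hnonneg s ⟨s, hs, 0, ⟨0, Fin.elim0, Fin.elim0, nofun, by simp⟩, by simp⟩
    have hpos (a : A) : 0 ≤ f (star a * a) := hsigma _ (SigmaSet.star_mul_self_mem a)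
    have hp (l : Λ) : f (star (p l) * p l) = 0 := by
      have := hnonneg _ ⟨0, SigmaSet.zero_mem, star (p l) * p l,
        ⟨1, fun _ => 1, fun _ => l, fun _ => zero_le_one, by simp⟩, rfl⟩
      simp only [zero_sub, map_neg, neg_nonneg] at this
      exact le_antisymm this (hpos _)
    rw [map_add, map_add, hf, map_eq_zero_of_mem_span hf hpos hp hu,
      map_eq_zero_of_mem_span hf hpos hp hw, add_zero, add_zero]
    exact hsigma s hs

end
end

section
/- Let A be a unital associative ℝ-algebra with involution and I a left ideal of A. Define a sequence of left ideals by I₀ = I and, recursively, I_{n+1} = the left ideal of A generated by the set {a ∈ A : −a*a ∈ Σ_A + I_n + I_n*}. Then ⋃_{n≥0} I_n = rr(I), the smallest real left ideal of A containing I. -/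
noncomputable section

/-- A left ideal `I` is real if whenever `∑ᵢ aᵢ* aᵢ ∈ I + I*`, every `aᵢ ∈ I`. -/
def IsRealStar (A : Type) [Ring A] [StarRing A] (I : Submodule A A) : Prop :=
  ∀ (r : ℕ) (a : Fin r → A),
    (∃ u ∈ I, ∃ w ∈ I, (∑ i, star (a i) * a i) = u + star w) → ∀ i, a i ∈ I

/-- The real radical: the smallest real left ideal containing `I`. -/
def rrStar (A : Type) [Ring A] [StarRing A] (I : Submodule A A) : Submodule A A :=
  sInf {J | IsRealStar A J ∧ I ≤ J}

/-- The iterative sequence: `I₀ = I` and `I_{n+1}` is the left ideal generated by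
`√α(I_n) = {a : −a*a ∈ Σ_A + I_n + I_n*}`. -/
def seqI (A : Type) [Ring A] [StarRing A] (I : Submodule A A) : ℕ → Submodule A A
  | 0 => I
  | n + 1 => Submodule.span A
      {a : A | ∃ s ∈ SigmaSet A, ∃ u ∈ seqI A I n, ∃ w ∈ seqI A I n,
        -(star a * a) = s + u + star w}

/-!
A left ideal `J` is real exactly when it contains `√α(J) = {a : −a*a ∈ Σ_A + J + J*}`: a witness
`−a*a = ∑ bᵢ*bᵢ + u + w*` for `a ∈ √α(J)` is the relation `a*a + ∑ bᵢ*bᵢ = −u + (−w)*`, and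
conversely `∑ aᵢ*aᵢ = u + w*` exhibits each `aᵢ` as an element of `√α(J)`. Hence every real left
ideal containing `I` contains every `I_n`, while the union of the increasing chain `I_n` is itself
real, because the two elements of `J` in any witness already lie in a common `I_n`.
-/

/-- `√α(J)`. -/
def realSqrtSet (A : Type) [Ring A] [StarRing A] (J : Submodule A A) : Set A :=
  {a : A | ∃ s ∈ SigmaSet A, ∃ u ∈ J, ∃ w ∈ J, -(star a * a) = s + u + star w}

section

variable {A : Type} [Ring A] [StarRing A]

theorem realSqrtSet_mono {J K : Submodule A A} (h : J ≤ K) :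
    realSqrtSet A J ⊆ realSqrtSet A K := by
  rintro a ⟨s, hs, u, hu, w, hw, heq⟩
  exact ⟨s, hs, u, h hu, w, h hw, heq⟩

theorem subset_realSqrtSet (J : Submodule A A) : (J : Set A) ⊆ realSqrtSet A J := by
  intro a ha
  have hmem : -(star a * a) ∈ J := J.neg_mem (J.smul_mem (star a) ha)
  exact ⟨0, ⟨0, Fin.elim0, by simp⟩, _, hmem, 0, J.zero_mem, by simp⟩

theorem sum_star_mul_self_update_zero {r : ℕ} (c : Fin r → A) (i : Fin r) :
    ∑ j, star (Function.update c i 0 j) * Function.update c i 0 j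
      = ∑ j, star (c j) * c j - star (c i) * c i := by
  have hupdate : (fun j => star (Function.update c i 0 j) * Function.update c i 0 j)
      = Function.update (fun j => star (c j) * c j) i 0 := by
    funext j
    by_cases hj : j = i <;> simp [hj]
  rw [hupdate, Finset.sum_update_of_mem (Finset.mem_univ i),
    Finset.sum_eq_sum_sdiff_singleton_add (Finset.mem_univ i), zero_add, add_sub_cancel_right]

theorem isRealStar_iff_realSqrtSet_subset (J : Submodule A A) :
    IsRealStar A J ↔ realSqrtSet A J ⊆ J := by
  constructor
  · rintro hJ a ⟨_, ⟨r, b, rfl⟩, u, hu, w, hw, heq⟩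
    let c : Fin (r + 1) → A := Fin.cons a b
    have hsum : ∑ i, star (c i) * c i = -u + star (-w) := by
      simp only [c, Fin.sum_univ_succ, Fin.cons_zero, Fin.cons_succ, star_neg]
      rw [neg_eq_iff_eq_neg.mp heq]
      abel
    simpa [c] using hJ (r + 1) c ⟨-u, J.neg_mem hu, -w, J.neg_mem hw, hsum⟩ 0
  · rintro hJ r c ⟨u, hu, w, hw, hsum⟩ i
    refine hJ ⟨_, ⟨r, Function.update c i 0, rfl⟩, -u, J.neg_mem hu, -w, J.neg_mem hw, ?_⟩
    rw [sum_star_mul_self_update_zero, hsum, star_neg]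
    abel

theorem seqI_le_succ (I : Submodule A A) (n : ℕ) : seqI A I n ≤ seqI A I (n + 1) :=
  (subset_realSqrtSet _).trans Submodule.subset_span

theorem seqI_mono (I : Submodule A A) : Monotone (seqI A I) :=
  monotone_nat_of_le_succ (seqI_le_succ I)

theorem seqI_le_of_isRealStar {I J : Submodule A A} (hJ : IsRealStar A J) (hIJ : I ≤ J) :
    ∀ n, seqI A I n ≤ J
  | 0 => hIJ
  | n + 1 => Submodule.span_le.mpr <|
      ((realSqrtSet_mono (seqI_le_of_isRealStar hJ hIJ n)).trans
        ((isRealStar_iff_realSqrtSet_subset J).mp hJ))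

theorem mem_iSup_seqI {I : Submodule A A} {a : A} :
    a ∈ ⨆ n, seqI A I n ↔ ∃ n, a ∈ seqI A I n :=
  Submodule.mem_iSup_of_chain ⟨seqI A I, seqI_mono I⟩ a

theorem isRealStar_iSup_seqI (I : Submodule A A) : IsRealStar A (⨆ n, seqI A I n) := by
  rw [isRealStar_iff_realSqrtSet_subset]
  rintro a ⟨s, hs, u, hu, w, hw, heq⟩
  obtain ⟨m, hu⟩ := mem_iSup_seqI.mp hu
  obtain ⟨k, hw⟩ := mem_iSup_seqI.mp hw
  have ha : a ∈ realSqrtSet A (seqI A I (max m k)) :=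
    ⟨s, hs, u, seqI_mono I (le_max_left m k) hu, w, seqI_mono I (le_max_right m k) hw, heq⟩
  exact Submodule.mem_iSup_of_mem (max m k + 1) (Submodule.subset_span ha)

theorem rrStar_eq_iSup_seqI (I : Submodule A A) : rrStar A I = ⨆ n, seqI A I n :=
  le_antisymm (sInf_le ⟨isRealStar_iSup_seqI I, le_iSup (seqI A I) 0⟩)
    (le_sInf fun _ ⟨hJ, hIJ⟩ => iSup_le (seqI_le_of_isRealStar hJ hIJ))

end

theorem stmt17_general (A : Type) [Ring A] [StarRing A]
    (I : Submodule A A) :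
    ∀ a : A, (∃ n : ℕ, a ∈ seqI A I n) ↔ a ∈ rrStar A I := by
  intro a
  rw [rrStar_eq_iSup_seqI, mem_iSup_seqI]

/-- The union of the iterates `I ⊆ √β(I) ⊆ √β(√β(I)) ⊆ …` is exactly the real radical. -/
theorem stmt17 (A : Type) [Ring A] [Algebra ℝ A] [StarRing A] [StarModule ℝ A]
    (I : Submodule A A) :
    ∀ a : A, (∃ n : ℕ, a ∈ seqI A I n) ↔ a ∈ rrStar A I :=
  stmt17_general A I

end
end

section
/- Let A be a commutative unital associative ℝ-algebra with involution and let I be an ideal of A. Then rr(I) = {a ∈ A : −(a*a)^k ∈ Σ_A + I + I* for some integer k ≥ 1} = {a ∈ A : −(a*a)^k ∈ Σ_A + I for some integer k ≥ 1}. -/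
/-!
Write `M = Σ_A + I` (`sigmaCone I`). The set `R` (`sigmaRadical I`) of `a` with `-(a* a)^k ∈ M`
for some `k ≥ 1` is an ideal: if `-(a* a)^k, -(b* b)^l ∈ M`, every monomial of
`-(a* a + b* b)^(k+l)` lies in `M` because `x c ∈ M` whenever `-x = -(y* y) ∈ M` and `c = c*`, and
`(a+b)*(a+b)` is dominated in `Σ_A` by `2(a* a + b* b)`, so `-((a+b)*(a+b))^(k+l) ∈ M`.
The same domination shows that `R` is real, so `rr(I) ⊆ R`. Conversely, if
`-(a* a)^k = s + u + w*`, then `(a^k)* a^k + s ∈ J + J*` for every real `J ⊇ I`, so `a^k ∈ J`,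
and a real ideal containing `(a* a)^k` contains `a` by repeatedly taking square roots.
-/

noncomputable section

section SumsOfHermitianSquares

variable {A : Type} [Ring A] [StarRing A]

theorem star_mul_self_mem_sigmaSet (b : A) : star b * b ∈ SigmaSet A := ⟨1, ![b], by simp⟩

variable (A) in
def sigmaAddSubmonoid : AddSubmonoid A where
  carrier := SigmaSet A
  zero_mem' := ⟨0, ![], by simp⟩
  add_mem' := by
    rintro _ _ ⟨r, b, rfl⟩ ⟨r', b', rfl⟩
    exact ⟨r + r', Fin.append b b', by simp [Fin.sum_univ_add]⟩

end SumsOfHermitianSquares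

section RealIdeal

variable {A : Type} [Ring A] [StarRing A] {J : Submodule A A}

theorem IsRealStar.mem_of_star_mul_self_add_mem (hJ : IsRealStar A J) {b s u w : A}
    (hs : s ∈ SigmaSet A) (hu : u ∈ J) (hw : w ∈ J) (h : star b * b + s = u + star w) :
    b ∈ J := by
  obtain ⟨r, c, rfl⟩ := hs
  simpa using hJ (r + 1) (Fin.cons b c) ⟨u, hu, w, hw, by simpa [Fin.sum_univ_succ] using h⟩ 0

theorem IsRealStar.mem_of_star_mul_self_mem (hJ : IsRealStar A J) {b : A}
    (h : star b * b ∈ J) : b ∈ J :=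
  hJ.mem_of_star_mul_self_add_mem (s := 0) ⟨0, ![], by simp⟩ h J.zero_mem (by simp)

theorem IsRealStar.mem_of_star_mul_self_pow_mem (hJ : IsRealStar A J) {a : A} {n : ℕ}
    (h : (star a * a) ^ n ∈ J) : a ∈ J := by
  have hx := IsSelfAdjoint.star_mul_self a
  suffices ∀ m, (star a * a) ^ (2 ^ m) ∈ J → a ∈ J by
    refine this n ?_
    rw [← Nat.sub_add_cancel n.lt_two_pow_self.le, pow_add]
    exact J.smul_mem _ h
  intro m
  induction m with
  | zero => simpa using hJ.mem_of_star_mul_self_mem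
  | succ m ih =>
    intro hm
    refine ih (hJ.mem_of_star_mul_self_mem ?_)
    rwa [(hx.pow _).star_eq, ← pow_add, ← two_mul, ← pow_succ']

end RealIdeal

section CommutativeSumsOfHermitianSquares

variable {A : Type} [CommRing A] [StarRing A]

theorem star_mul_self_mul_mem_sigmaSet (c : A) {x : A} (hx : x ∈ SigmaSet A) :
    star c * c * x ∈ SigmaSet A := by
  obtain ⟨r, b, rfl⟩ := hx
  refine ⟨r, fun i => c * b i, ?_⟩
  simp only [Finset.mul_sum, star_mul']
  exact Finset.sum_congr rfl fun i _ => by ring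

variable (A) in
def sigmaSubsemiring : Subsemiring A :=
  { sigmaAddSubmonoid A with
    one_mem' := ⟨1, ![1], by simp⟩
    mul_mem' := by
      rintro _ y ⟨r, b, rfl⟩ hy
      rw [Finset.sum_mul]
      exact AddSubmonoid.sum_mem _ fun i _ => star_mul_self_mul_mem_sigmaSet (b i) hy }

theorem star_mul_self_mem_sigmaSubsemiring (b : A) : star b * b ∈ sigmaSubsemiring A :=
  star_mul_self_mem_sigmaSet b

theorem pow_sub_pow_mem_sigmaSubsemiring {S Z : A} (hZ : Z ∈ sigmaSubsemiring A)
    (hSZ : S - Z ∈ sigmaSubsemiring A) (N : ℕ) : S ^ N - Z ^ N ∈ sigmaSubsemiring A := by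
  have hS : S ∈ sigmaSubsemiring A := by simpa using add_mem hSZ hZ
  rw [← geom_sum₂_mul S Z N]
  exact mul_mem (sum_mem fun i _ => mul_mem (pow_mem hS _) (pow_mem hZ _)) hSZ

end CommutativeSumsOfHermitianSquares

section SigmaCone

variable {A : Type} [CommRing A] [StarRing A] {I : Ideal A}

def sigmaCone (I : Ideal A) : AddSubmonoid A :=
  (sigmaSubsemiring A).toAddSubmonoid ⊔ I.toAddSubmonoid

theorem mem_sigmaCone {x : A} :
    x ∈ sigmaCone I ↔ ∃ s ∈ SigmaSet A, ∃ u ∈ I, x = s + u := by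
  simp only [sigmaCone, AddSubmonoid.mem_sup, eq_comm (a := x)]
  rfl

theorem mem_sigmaCone_of_mem_sigmaSubsemiring {s : A} (hs : s ∈ sigmaSubsemiring A) :
    s ∈ sigmaCone I :=
  AddSubmonoid.mem_sup_left hs

theorem mul_mem_sigmaCone {σ m : A} (hσ : σ ∈ sigmaSubsemiring A) (hm : m ∈ sigmaCone I) :
    σ * m ∈ sigmaCone I := by
  obtain ⟨s, hs, u, hu, rfl⟩ := mem_sigmaCone.1 hm
  exact mem_sigmaCone.2 ⟨σ * s, mul_mem hσ hs, σ * u, I.mul_mem_left σ hu, mul_add σ s u⟩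

theorem neg_pow_mem_sigmaCone_of_sub_mem {S Z : A} {N : ℕ} (hZ : Z ∈ sigmaSubsemiring A)
    (hSZ : S - Z ∈ sigmaSubsemiring A) (hS : -(S ^ N) ∈ sigmaCone I) :
    -(Z ^ N) ∈ sigmaCone I := by
  rw [show -(Z ^ N) = -(S ^ N) + (S ^ N - Z ^ N) by ring]
  exact add_mem hS (mem_sigmaCone_of_mem_sigmaSubsemiring
    (pow_sub_pow_mem_sigmaSubsemiring hZ hSZ N))

variable [Invertible (2 : A)]

theorem isSelfAdjoint_invOf_two : IsSelfAdjoint (⅟2 : A) := by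
  have h := congrArg star (mul_invOf_self (2 : A))
  rw [star_mul, star_one, star_ofNat] at h
  exact (invOf_eq_left_inv h).symm

/-- Since `4c = (c + 1)² - (c - 1)²`, `b* b c` is a hermitian square plus `-(b* b)` times one. -/
theorem star_mul_self_mul_mem_sigmaCone {b c : A} (hb : -(star b * b) ∈ sigmaCone I)
    (hc : IsSelfAdjoint c) : star b * b * c ∈ sigmaCone I := by
  set h : A := ⅟2
  have hh : star h = h := isSelfAdjoint_invOf_two
  have key : star b * b * c = star (h * b * (c + 1)) * (h * b * (c + 1)) +
      star (h * (c - 1)) * (h * (c - 1)) * -(star b * b) := by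
    simp only [star_mul', star_add, star_sub, star_one, hh, hc.star_eq]
    linear_combination (-(star b * b * c * (1 + 2 * h))) * (invOf_mul_self (2 : A))
  rw [key]
  exact add_mem (mem_sigmaCone_of_mem_sigmaSubsemiring (star_mul_self_mem_sigmaSubsemiring _))
    (mul_mem_sigmaCone (star_mul_self_mem_sigmaSubsemiring _) hb)

theorem pow_mul_mem_sigmaCone {a c : A} {k j : ℕ} (hkj : k ≤ j)
    (ha : -((star a * a) ^ k) ∈ sigmaCone I) (hc : IsSelfAdjoint c) :
    (star a * a) ^ j * c ∈ sigmaCone I := by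
  have hpow : (star a * a) ^ k = star (a ^ k) * a ^ k := by rw [star_pow, mul_pow]
  have hsplit : (star a * a) ^ j * c = star (a ^ k) * a ^ k * ((star a * a) ^ (j - k) * c) := by
    rw [← hpow, ← mul_assoc, ← pow_add, Nat.add_sub_cancel' hkj]
  rw [hsplit]
  exact star_mul_self_mul_mem_sigmaCone (hpow ▸ ha) (((IsSelfAdjoint.star_mul_self a).pow _).mul hc)

theorem neg_add_pow_mem_sigmaCone {a b : A} {k l : ℕ} (ha : -((star a * a) ^ k) ∈ sigmaCone I)
    (hb : -((star b * b) ^ l) ∈ sigmaCone I) :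
    -((star a * a + star b * b) ^ (k + l)) ∈ sigmaCone I := by
  have hX := IsSelfAdjoint.star_mul_self a
  have hY := IsSelfAdjoint.star_mul_self b
  rw [add_pow, ← Finset.sum_neg_distrib]
  refine AddSubmonoid.sum_mem _ fun i _ => ?_
  have hcoeff : IsSelfAdjoint ((k + l).choose i : A) := .natCast _
  by_cases hki : k ≤ i
  · rw [show -((star a * a) ^ i * (star b * b) ^ (k + l - i) * ((k + l).choose i : A)) =
        (star a * a) ^ i * -((star b * b) ^ (k + l - i) * ((k + l).choose i : A)) by ring]
    exact pow_mul_mem_sigmaCone hki ha ((hY.pow _).mul hcoeff).neg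
  · rw [show -((star a * a) ^ i * (star b * b) ^ (k + l - i) * ((k + l).choose i : A)) =
        (star b * b) ^ (k + l - i) * -((star a * a) ^ i * ((k + l).choose i : A)) by ring]
    exact pow_mul_mem_sigmaCone (by omega) hb ((hX.pow _).mul hcoeff).neg

end SigmaCone

section SigmaRadical

variable {A : Type} [CommRing A] [StarRing A] [Invertible (2 : A)]

def sigmaRadical (I : Ideal A) : Ideal A where
  carrier := {a | ∃ k, 1 ≤ k ∧ -((star a * a) ^ k) ∈ sigmaCone I}
  zero_mem' := ⟨1, le_rfl, by simp⟩
  add_mem' := by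
    rintro a b ⟨k, hk, ha⟩ ⟨l, -, hb⟩
    refine ⟨k + l, by omega, ?_⟩
    refine neg_pow_mem_sigmaCone_of_sub_mem (S := 2 * (star a * a + star b * b))
      (star_mul_self_mem_sigmaSubsemiring _) ?_ ?_
    · rw [show 2 * (star a * a + star b * b) - star (a + b) * (a + b) =
          star (a - b) * (a - b) by simp only [star_add, star_sub]; ring]
      exact star_mul_self_mem_sigmaSubsemiring _
    · rw [mul_pow, ← mul_neg]
      exact mul_mem_sigmaCone (pow_mem (ofNat_mem _ 2) _) (neg_add_pow_mem_sigmaCone ha hb)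
  smul_mem' := by
    rintro c a ⟨k, hk, ha⟩
    refine ⟨k, hk, ?_⟩
    rw [smul_eq_mul, show -((star (c * a) * (c * a)) ^ k) =
      (star c * c) ^ k * -((star a * a) ^ k) by rw [star_mul']; ring]
    exact mul_mem_sigmaCone (pow_mem (star_mul_self_mem_sigmaSubsemiring c) k) ha

theorem mem_sigmaRadical {I : Ideal A} {a : A} :
    a ∈ sigmaRadical I ↔
      ∃ k, 1 ≤ k ∧ ∃ s ∈ SigmaSet A, ∃ u ∈ I, -((star a * a) ^ k) = s + u :=
  exists_congr fun _ => and_congr_right' mem_sigmaCone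

theorem star_mem_sigmaRadical {I : Ideal A} {a : A} (ha : a ∈ sigmaRadical I) :
    star a ∈ sigmaRadical I := by
  obtain ⟨k, hk, h⟩ := ha
  exact ⟨k, hk, by rwa [star_star, mul_comm]⟩

theorem le_sigmaRadical (I : Ideal A) : I ≤ sigmaRadical I := fun a ha =>
  mem_sigmaRadical.2 ⟨1, le_rfl, 0, zero_mem (sigmaSubsemiring A), _,
    I.neg_mem (I.mul_mem_left (star a) ha), by simp⟩

theorem isRealStar_sigmaRadical (I : Ideal A) : IsRealStar A (sigmaRadical I) := by
  rintro r a ⟨u, hu, w, hw, hsum⟩ i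
  set F := ∑ j, star (a j) * a j
  have hF : IsSelfAdjoint F := isSelfAdjoint_sum _ fun j _ => .star_mul_self (a j)
  obtain ⟨m, hm, hFm⟩ : F ∈ sigmaRadical I := hsum ▸ add_mem hu (star_mem_sigmaRadical hw)
  rw [hF.star_eq, ← sq, ← pow_mul] at hFm
  refine ⟨2 * m, by omega,
    neg_pow_mem_sigmaCone_of_sub_mem (star_mul_self_mem_sigmaSubsemiring (a i)) ?_ hFm⟩
  rw [show F = _ from (Finset.sum_erase_add _ _ (Finset.mem_univ i)).symm, add_sub_cancel_right]
  exact sum_mem fun j _ => star_mul_self_mem_sigmaSubsemiring (a j)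

end SigmaRadical

theorem mem_rrStar_of_neg_pow_eq {A : Type} [CommRing A] [StarRing A] {I : Ideal A}
    {a s u w : A} {k : ℕ} (hs : s ∈ SigmaSet A) (hu : u ∈ I) (hw : w ∈ I)
    (h : -((star a * a) ^ k) = s + u + star w) : a ∈ rrStar A I := by
  refine Submodule.mem_sInf.2 fun J ⟨hJ, hIJ⟩ => hJ.mem_of_star_mul_self_pow_mem (n := k) ?_
  have hak : a ^ k ∈ J := hJ.mem_of_star_mul_self_add_mem hs (J.neg_mem (hIJ hu))
    (J.neg_mem (hIJ hw)) (by rw [star_neg, star_pow, ← mul_pow]; linear_combination -h)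
  rw [mul_pow]
  exact J.smul_mem _ hak

theorem stmt18_general (A : Type) [CommRing A] [Algebra ℝ A] [StarRing A]
    (I : Ideal A) :
    (∀ a : A, a ∈ rrStar A I ↔
      ∃ k : ℕ, 1 ≤ k ∧ ∃ s ∈ SigmaSet A, ∃ u ∈ I, ∃ w ∈ I,
        -((star a * a) ^ k) = s + u + star w) ∧
    (∀ a : A, a ∈ rrStar A I ↔
      ∃ k : ℕ, 1 ≤ k ∧ ∃ s ∈ SigmaSet A, ∃ u ∈ I,
        -((star a * a) ^ k) = s + u) := by
  let _ : Invertible (2 : ℝ) := invertibleOfNonzero two_ne_zero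
  let _ : Invertible (2 : A) := (Invertible.map (algebraMap ℝ A) 2).copy 2 (map_ofNat _ 2).symm
  have rr_le : rrStar A I ≤ sigmaRadical I :=
    sInf_le ⟨isRealStar_sigmaRadical I, le_sigmaRadical I⟩
  refine ⟨fun a => ⟨fun ha => ?_, ?_⟩, fun a => ⟨fun ha => mem_sigmaRadical.1 (rr_le ha), ?_⟩⟩
  · obtain ⟨k, hk, s, hs, u, hu, h⟩ := mem_sigmaRadical.1 (rr_le ha)
    exact ⟨k, hk, s, hs, u, hu, 0, I.zero_mem, by simpa using h⟩
  · rintro ⟨k, -, s, hs, u, hu, w, hw, h⟩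
    exact mem_rrStar_of_neg_pow_eq hs hu hw h
  · rintro ⟨k, -, s, hs, u, hu, h⟩
    exact mem_rrStar_of_neg_pow_eq hs hu I.zero_mem (by simpa using h)

/-- Classical real Nullstellensatz for commutative `*`-algebras:
`rr(I) = {a : −(a*a)^k ∈ Σ_A + I + I* for some k ≥ 1} = {a : −(a*a)^k ∈ Σ_A + I}`. -/
theorem stmt18 (A : Type) [CommRing A] [Algebra ℝ A] [StarRing A] [StarModule ℝ A]
    (I : Ideal A) :
    (∀ a : A, a ∈ rrStar A I ↔
      ∃ k : ℕ, 1 ≤ k ∧ ∃ s ∈ SigmaSet A, ∃ u ∈ I, ∃ w ∈ I,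
        -((star a * a) ^ k) = s + u + star w) ∧
    (∀ a : A, a ∈ rrStar A I ↔
      ∃ k : ℕ, 1 ≤ k ∧ ∃ s ∈ SigmaSet A, ∃ u ∈ I,
        -((star a * a) ^ k) = s + u) :=
  stmt18_general A I

end
end

section
/- Let n ≥ 1 and let I be a left ideal of M_n(ℝ[t]), the algebra of n×n matrices over the polynomial ring ℝ[t] in one variable, equipped with the involution P* = Pᵀ (entrywise transpose; coefficient conjugation is trivial over ℝ). Define √E(I) = {Q ∈ M_n(ℝ[t]) : for every a ∈ ℝ and every v ∈ ℝⁿ, if P(a)v = 0 for all P ∈ I, then Q(a)v = 0}, where P(a) ∈ M_n(ℝ) denotes the entrywise evaluation of P at t = a. Then √E(I) = rr(I), the smallest real left ideal of M_n(ℝ[t]) containing I. -/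
open Matrix Polynomial

noncomputable section

/-- The `*`-algebra `M_n(ℝ[t])` of `n × n` matrices of real polynomials in one variable,
with involution `P* = Pᵀ`. -/
abbrev MP (n : ℕ) := Matrix (Fin n) (Fin n) (Polynomial ℝ)

/-- A left ideal `I` of `M_n(ℝ[t])` is real if whenever `∑ᵢ aᵢᵀ aᵢ ∈ I + I*`,
every `aᵢ ∈ I`. -/
def IsRealMP {n : ℕ} (I : Submodule (MP n) (MP n)) : Prop :=
  ∀ (r : ℕ) (a : Fin r → MP n),
    (∃ u ∈ I, ∃ w ∈ I, (∑ i, (a i)ᵀ * a i) = u + wᵀ) → ∀ i, a i ∈ I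

/-- The real radical: the smallest real left ideal of `M_n(ℝ[t])` containing `I`. -/
def rrMP {n : ℕ} (I : Submodule (MP n) (MP n)) : Submodule (MP n) (MP n) :=
  sInf {J | IsRealMP J ∧ I ≤ J}

/-- Entrywise evaluation of a polynomial matrix at the real point `a`. -/
def evalMP {n : ℕ} (P : MP n) (a : ℝ) : Matrix (Fin n) (Fin n) ℝ :=
  P.map (fun q => q.eval a)

/-!
A real left ideal `J` of `M_n(ℝ[t])` is determined by its row modules `{x ∈ ℝ[t]ⁿ : x placed as
row i lies in J}`, and realness of `J` makes them cancel sums of two squares: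
`(f² + g²) p ∈ N → f p ∈ N`. In a Smith basis of `ℝ[t]ⁿ` adapted to such an `N`, this forces
every invariant factor `d` to be a product of distinct real linear factors: a double root `α`
would give `d ∣ (t - α)² h` without `d ∣ (t - α) h`, and a non-real root `u + iv` would give
`d ∣ ((t - u)² + v²) h` without `d ∣ v h`. Divisibility by such a `d` is detected by vanishing
at its real roots, which is what membership in the E-radical provides, coordinate by coordinate,
after an orthogonality argument in `ℝⁿ` at each point. Conversely the E-radical is real because
`vᵀ (∑ aᵢᵀ aᵢ)(a) v = ∑ ‖aᵢ(a) v‖²`.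
-/

/-- All colon ideals `(d) : h` are real with respect to sums of two squares. -/
def SqAddSqCancel {A : Type*} [CommSemiring A] (d : A) : Prop :=
  ∀ f g h : A, d ∣ (f ^ 2 + g ^ 2) * h → d ∣ f * h

namespace SqAddSqCancel

theorem sq_add_sq_dvd {A : Type*} [CommRing A] [IsDomain A] {d f g : A}
    (hd : SqAddSqCancel d) (hd0 : d ≠ 0) (hfg : f ^ 2 + g ^ 2 ∣ d) : f ^ 2 + g ^ 2 ∣ f := by
  obtain ⟨h, rfl⟩ := hfg
  exact (mul_dvd_mul_iff_right (right_ne_zero_of_mul hd0)).mp (hd f g h dvd_rfl)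

theorem nodup_roots {R : Type*} [CommRing R] [IsDomain R] {d : R[X]} (hd : SqAddSqCancel d)
    (hd0 : d ≠ 0) : d.roots.Nodup := by
  classical
  refine Multiset.nodup_iff_count_le_one.mpr fun α => ?_
  by_contra! h2
  rw [count_roots, Nat.lt_iff_add_one_le, le_rootMultiplicity_iff hd0] at h2
  have := natDegree_le_of_dvd (hd.sq_add_sq_dvd hd0 (g := 0) (by simpa using h2))
    (X_sub_C_ne_zero α)
  simp [natDegree_pow] at this

variable {d : ℝ[X]}

theorem exists_isRoot_of_dvd (hd : SqAddSqCancel d) (hd0 : d ≠ 0) {q : ℝ[X]} (hqd : q ∣ d)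
    (hq : 0 < q.natDegree) : ∃ α : ℝ, q.IsRoot α := by
  obtain ⟨z, hz⟩ : ∃ z : ℂ, aeval z q = 0 :=
    IsAlgClosed.exists_aeval_eq_zero ℂ q (natDegree_pos_iff_degree_pos.mp hq).ne'
  by_cases him : z.im = 0
  · refine ⟨z.re, ?_⟩
    have hz_re : z = algebraMap ℝ ℂ z.re := Complex.ext (by simp) (by simp [him])
    rwa [hz_re, aeval_algebraMap_apply, Complex.coe_algebraMap, Complex.ofReal_eq_zero,
      coe_aeval_eq_eval] at hz
  · have hquad : C z.im ^ 2 + (X - C z.re) ^ 2 = X ^ 2 - C (2 * z.re) * X + C (‖z‖ ^ 2) := by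
      rw [Complex.sq_norm, Complex.normSq_apply]
      simp only [map_add, map_mul, map_ofNat]
      ring
    have hle := natDegree_le_of_dvd (hd.sq_add_sq_dvd hd0 (hquad ▸
      (quadratic_dvd_of_aeval_eq_zero_im_ne_zero q hz him).trans hqd)) (by simpa using him)
    have hdeg : (C z.im ^ 2 + (X - C z.re) ^ 2).natDegree = 2 := by compute_degree!
    rw [hdeg, natDegree_C] at hle
    omega

theorem dvd_of_forall_isRoot (hd : SqAddSqCancel d) (hd0 : d ≠ 0) {c : ℝ[X]}
    (hc : ∀ α, d.IsRoot α → c.IsRoot α) : d ∣ c := by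
  obtain ⟨q, hpq, -, hq⟩ := exists_prod_multiset_X_sub_C_mul d
  set p := (d.roots.map fun a => X - C a).prod
  have hq0 : q.natDegree = 0 := by
    by_contra hq0
    obtain ⟨α, hα⟩ :=
      hd.exists_isRoot_of_dvd hd0 (Dvd.intro_left p hpq) (Nat.pos_of_ne_zero hq0)
    have : α ∈ q.roots := (mem_roots (right_ne_zero_of_mul (hpq ▸ hd0))).mpr hα
    simp [hq] at this
  obtain ⟨k, rfl⟩ := natDegree_eq_zero.mp hq0
  have hk : IsUnit (C k) :=
    isUnit_C.mpr (isUnit_iff_ne_zero.mpr fun h => hd0 (by simp [← hpq, h]))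
  have hpc : p ∣ c := by
    rcases eq_or_ne c 0 with rfl | hc0
    · exact dvd_zero p
    refine (Multiset.prod_X_sub_C_dvd_iff_le_roots hc0 _).mpr
      ((Multiset.le_iff_subset (hd.nodup_roots hd0)).mpr fun α hα => ?_)
    exact (mem_roots hc0).mpr (hc α (isRoot_of_mem_roots hα))
  rwa [← hpq, hk.mul_right_dvd]

end SqAddSqCancel

theorem Submodule.mem_of_forall_dotProduct_eq_zero {K ι : Type*} [Field K] [Fintype ι]
    {W : Submodule K (ι → K)} {x : ι → K} (hx : ∀ v, (∀ w ∈ W, w ⬝ᵥ v = 0) → x ⬝ᵥ v = 0) :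
    x ∈ W := by
  classical
  by_contra hxW
  obtain ⟨φ, hφx, hφW⟩ := W.exists_dual_map_eq_bot_of_notMem hxW inferInstance
  have hφ : ∀ w, φ w = w ⬝ᵥ (dotProductEquiv K ι).symm φ := fun w => by
    rw [dotProduct_comm, ← dotProductEquiv_apply_apply, LinearEquiv.apply_symm_apply]
  refine hφx ((hφ x).trans (hx _ fun w hw => ?_))
  have hφw : φ w ∈ W.map φ := Submodule.mem_map_of_mem hw
  rwa [hφW, Submodule.mem_bot, hφ] at hφw

theorem LinearMap.eval_apply_eq_of_forall_eval_eq {R ι : Type*} [CommRing R] (α : R)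
    (φ : (ι → R[X]) →ₗ[R[X]] R[X]) {y z : ι → R[X]} (h : ∀ j, (y j).eval α = (z j).eval α) :
    (φ y).eval α = (φ z).eval α := by
  choose w hw using fun j => dvd_iff_isRoot.mpr (show (y j - z j).IsRoot α by simp [h j])
  have : φ y - φ z = (X - C α) * φ w := by
    rw [← map_sub, show y - z = (X - C α) • w by ext1 j; simp [hw j], map_smul, smul_eq_mul]
  simpa [sub_eq_zero] using congrArg (eval α) this

namespace Module.Basis.SmithNormalForm

variable {R M ι : Type*} [CommRing R] [AddCommGroup M] [Module R M] {N : Submodule R M} {r : ℕ}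
  (snf : Basis.SmithNormalForm N ι r)

theorem a_dvd_repr {x : M} (hx : x ∈ N) (i : Fin r) : snf.a i ∣ snf.bM.repr x (snf.f i) := by
  have h := snf.repr_apply_embedding_eq_repr_smul ⟨x, hx⟩ (i := i)
  rw [map_smul] at h
  exact ⟨_, h⟩

theorem a_dvd_of_smul_mem {c : R} {i : Fin r} (hc : c • snf.bM (snf.f i) ∈ N) : snf.a i ∣ c := by
  simpa using snf.a_dvd_repr hc i

theorem a_ne_zero [Nontrivial R] (i : Fin r) : snf.a i ≠ 0 := fun h =>
  snf.bN.ne_zero i (Subtype.ext (by rw [snf.snf i, h, zero_smul, Submodule.coe_zero]))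

theorem mem_of_a_dvd_repr [Fintype ι] {x : M}
    (hout : ∀ j ∉ Set.range snf.f, snf.bM.repr x j = 0)
    (hin : ∀ i, snf.a i ∣ snf.bM.repr x (snf.f i)) : x ∈ N := by
  rw [← snf.bM.sum_repr x]
  refine N.sum_mem fun j _ => ?_
  by_cases hj : j ∈ Set.range snf.f
  · obtain ⟨i, rfl⟩ := hj
    obtain ⟨s, hs⟩ := hin i
    rw [hs, mul_comm, mul_smul, ← snf.snf i]
    exact N.smul_mem s (snf.bN i).2
  · rw [hout j hj, zero_smul]
    exact N.zero_mem

theorem sqAddSqCancel_a (hN : ∀ (f g : R) (p : M), (f ^ 2 + g ^ 2) • p ∈ N → f • p ∈ N)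
    (i : Fin r) : SqAddSqCancel (snf.a i) := by
  rintro f g h ⟨s, hs⟩
  have hmem : (f ^ 2 + g ^ 2) • h • snf.bM (snf.f i) ∈ N := by
    rw [smul_smul, hs, mul_comm, mul_smul, ← snf.snf i]
    exact N.smul_mem s (snf.bN i).2
  have hfh := hN f g _ hmem
  rw [smul_smul] at hfh
  exact snf.a_dvd_of_smul_mem hfh

end Module.Basis.SmithNormalForm

theorem Submodule.mem_of_forall_eval_dotProduct_eq_zero {ι : Type*} [Fintype ι]
    {N : Submodule ℝ[X] (ι → ℝ[X])}
    (hN : ∀ (f g : ℝ[X]) (p : ι → ℝ[X]), (f ^ 2 + g ^ 2) • p ∈ N → f • p ∈ N) {x : ι → ℝ[X]}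
    (hx : ∀ (α : ℝ) (v : ι → ℝ), (∀ p ∈ N, eval α ∘ p ⬝ᵥ v = 0) → eval α ∘ x ⬝ᵥ v = 0) :
    x ∈ N := by
  obtain ⟨r, snf⟩ := N.smithNormalForm (Pi.basisFun ℝ[X] ι)
  have hcoord : ∀ α j, ∃ p ∈ N, (snf.bM.repr x j).eval α = (snf.bM.repr p j).eval α := by
    intro α j
    obtain ⟨p, hp, hpx⟩ : eval α ∘ x ∈ (N.restrictScalars ℝ).map ((leval α).compLeft ι) :=
      Submodule.mem_of_forall_dotProduct_eq_zero fun v hv =>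
        hx α v fun p hp => hv _ ⟨p, hp, rfl⟩
    exact ⟨p, hp, (snf.bM.coord j).eval_apply_eq_of_forall_eval_eq α fun k =>
      (congrFun hpx k).symm⟩
  refine snf.mem_of_a_dvd_repr (fun j hj => Polynomial.funext fun α => ?_) fun i => ?_
  · obtain ⟨p, hp, hpx⟩ := hcoord α j
    rw [hpx, snf.repr_eq_zero_of_notMem_range ⟨p, hp⟩ hj, eval_zero]
  · refine (snf.sqAddSqCancel_a hN i).dvd_of_forall_isRoot (snf.a_ne_zero i) fun α hα => ?_
    obtain ⟨p, hp, hpx⟩ := hcoord α (snf.f i)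
    obtain ⟨s, hs⟩ := snf.a_dvd_repr hp i
    rw [IsRoot, hpx, hs, eval_mul, hα.eq_zero, zero_mul]

theorem Matrix.mulVec_eq_zero_of_dotProduct_sum_transpose_mul_mulVec {R m ι : Type*}
    [CommRing R] [LinearOrder R] [IsStrictOrderedRing R] [Fintype m] [Fintype ι]
    {A : ι → Matrix m m R} {v : m → R} (h : v ⬝ᵥ (∑ i, (A i)ᵀ * A i) *ᵥ v = 0) (i : ι) :
    A i *ᵥ v = 0 := by
  have hsum : v ⬝ᵥ (∑ i, (A i)ᵀ * A i) *ᵥ v = ∑ i, (A i *ᵥ v) ⬝ᵥ (A i *ᵥ v) := by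
    simp only [sum_mulVec, dotProduct_sum, ← mulVec_mulVec, dotProduct_mulVec, vecMul_transpose]
  have hnonneg : ∀ w : m → R, 0 ≤ w ⬝ᵥ w := fun w =>
    Finset.sum_nonneg fun j _ => mul_self_nonneg (w j)
  rw [hsum] at h
  exact dotProduct_self_eq_zero.mp
    ((Finset.sum_eq_zero_iff_of_nonneg fun i _ => hnonneg _).mp h i (Finset.mem_univ i))

section MatrixPolynomial

variable {n : ℕ}

theorem evalMP_eq_mapMatrix (P : MP n) (α : ℝ) : evalMP P α = (evalRingHom α).mapMatrix P := rfl

theorem evalMP_add (P Q : MP n) (α : ℝ) : evalMP (P + Q) α = evalMP P α + evalMP Q α :=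
  map_add (evalRingHom α).mapMatrix P Q

theorem evalMP_mul (P Q : MP n) (α : ℝ) : evalMP (P * Q) α = evalMP P α * evalMP Q α :=
  map_mul (evalRingHom α).mapMatrix P Q

theorem evalMP_sum {ι : Type*} (s : Finset ι) (P : ι → MP n) (α : ℝ) :
    evalMP (∑ k ∈ s, P k) α = ∑ k ∈ s, evalMP (P k) α :=
  map_sum (evalRingHom α).mapMatrix P s

theorem evalMP_transpose (P : MP n) (α : ℝ) : evalMP Pᵀ α = (evalMP P α)ᵀ :=
  transpose_map

def rowMatrix (i : Fin n) : (Fin n → ℝ[X]) →ₗ[ℝ[X]] MP n where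
  toFun := vecMulVec (Pi.single i 1)
  map_add' := vecMulVec_add _
  map_smul' c x := vecMulVec_smul c _ x

theorem rowMatrix_apply (i : Fin n) (x : Fin n → ℝ[X]) :
    rowMatrix i x = vecMulVec (Pi.single i 1) x :=
  rfl

def rowModule (J : Submodule (MP n) (MP n)) (i : Fin n) : Submodule ℝ[X] (Fin n → ℝ[X]) :=
  (J.restrictScalars ℝ[X]).comap (rowMatrix i)

theorem mem_rowModule {J : Submodule (MP n) (MP n)} {i : Fin n} {x : Fin n → ℝ[X]} :
    x ∈ rowModule J i ↔ rowMatrix i x ∈ J :=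
  Iff.rfl

theorem single_one_mul_eq_rowMatrix (i k : Fin n) (P : MP n) :
    single i k 1 * P = rowMatrix i (P k) := by
  rw [single_eq_single_vecMulVec_single, vecMulVec_mul, single_one_vecMul, rowMatrix_apply, row]

theorem sum_rowMatrix (P : MP n) : ∑ i, rowMatrix i (P i) = P := by
  ext a b : 1
  simp [rowMatrix_apply, vecMulVec_apply, Pi.single_apply, Matrix.sum_apply]

theorem row_mem_rowModule {J : Submodule (MP n) (MP n)} {P : MP n} (hP : P ∈ J) (i k : Fin n) :
    P k ∈ rowModule J i := by
  rw [mem_rowModule, ← single_one_mul_eq_rowMatrix]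
  exact J.smul_mem _ hP

theorem mem_iff_forall_row_mem_rowModule {J : Submodule (MP n) (MP n)} {P : MP n} :
    P ∈ J ↔ ∀ i, P i ∈ rowModule J i := by
  refine ⟨fun hP i => row_mem_rowModule hP i i, fun h => ?_⟩
  rw [← sum_rowMatrix P]
  exact J.sum_mem fun i _ => h i

theorem rowMatrix_transpose_mul_rowMatrix (i : Fin n) (x y : Fin n → ℝ[X]) :
    (rowMatrix i x)ᵀ * rowMatrix i y = vecMulVec x y := by
  simp [rowMatrix_apply, vecMulVec_mul_vecMulVec]

theorem IsRealMP.smul_mem_rowModule {J : Submodule (MP n) (MP n)} (hJ : IsRealMP J) {i : Fin n}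
    {f g : ℝ[X]} {p : Fin n → ℝ[X]} (hp : (f ^ 2 + g ^ 2) • p ∈ rowModule J i) :
    f • p ∈ rowModule J i := by
  let a : Fin 2 → MP n := ![rowMatrix i (f • p), rowMatrix i (g • p)]
  have hsum : ∑ k, (a k)ᵀ * a k = (vecMulVec p ((f ^ 2 + g ^ 2) • p))ᵀ := by
    simp only [Fin.sum_univ_two, a, cons_val_zero, cons_val_one,
      rowMatrix_transpose_mul_rowMatrix, transpose_vecMulVec]
    ext k l : 1
    simp only [Matrix.add_apply, vecMulVec_apply, Pi.smul_apply, smul_eq_mul]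
    ring
  have hmem : vecMulVec p ((f ^ 2 + g ^ 2) • p) ∈ J := by
    have := J.smul_mem (vecMulVec p (Pi.single i 1)) hp
    simpa [rowMatrix_apply, vecMulVec_mul_vecMulVec] using this
  exact hJ 2 a ⟨0, J.zero_mem, _, hmem, by rw [hsum, zero_add]⟩ 0

def eRadical (I : Submodule (MP n) (MP n)) : Submodule (MP n) (MP n) where
  carrier := {Q | ∀ (a : ℝ) (v : Fin n → ℝ),
    (∀ P ∈ I, evalMP P a *ᵥ v = 0) → evalMP Q a *ᵥ v = 0}
  zero_mem' a v _ := by simp [evalMP_eq_mapMatrix]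
  add_mem' hP hQ a v hv := by rw [evalMP_add, add_mulVec, hP a v hv, hQ a v hv, add_zero]
  smul_mem' P Q hQ a v hv := by
    rw [smul_eq_mul, evalMP_mul, ← mulVec_mulVec, hQ a v hv, mulVec_zero]

theorem le_eRadical (I : Submodule (MP n) (MP n)) : I ≤ eRadical I :=
  fun _ hQ _ _ hv => hv _ hQ

theorem eRadical_mono {I J : Submodule (MP n) (MP n)} (hIJ : I ≤ J) : eRadical I ≤ eRadical J :=
  fun _ hQ a v hv => hQ a v fun P hP => hv P (hIJ hP)

theorem isRealMP_eRadical (I : Submodule (MP n) (MP n)) : IsRealMP (eRadical I) := by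
  rintro r A ⟨U, hU, W, hW, hsum⟩ i a v hv
  refine mulVec_eq_zero_of_dotProduct_sum_transpose_mul_mulVec (A := fun k => evalMP (A k) a) ?_ i
  have : ∑ k, (evalMP (A k) a)ᵀ * evalMP (A k) a = evalMP (∑ k, (A k)ᵀ * A k) a := by
    simp only [evalMP_sum, evalMP_mul, evalMP_transpose]
  rw [this, hsum, evalMP_add, evalMP_transpose, add_mulVec, dotProduct_add, hU a v hv,
    dotProduct_mulVec, vecMul_transpose, hW a v hv, dotProduct_zero, zero_dotProduct, add_zero]

theorem IsRealMP.eRadical_le {J : Submodule (MP n) (MP n)} (hJ : IsRealMP J) :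
    eRadical J ≤ J := by
  intro Q hQ
  refine mem_iff_forall_row_mem_rowModule.mpr fun i =>
    Submodule.mem_of_forall_eval_dotProduct_eq_zero (fun f g p => hJ.smul_mem_rowModule)
      fun a v hv => ?_
  have hQv : evalMP Q a *ᵥ v = 0 :=
    hQ a v fun P hP => funext fun k => hv _ (row_mem_rowModule hP i k)
  exact congrFun hQv i

theorem eRadical_eq_rrMP (I : Submodule (MP n) (MP n)) : eRadical I = rrMP I :=
  le_antisymm (le_sInf fun _ ⟨hJ, hIJ⟩ => (eRadical_mono hIJ).trans hJ.eRadical_le)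
    (sInf_le ⟨isRealMP_eRadical I, le_eRadical I⟩)

end MatrixPolynomial

theorem stmt19_general (n : ℕ) (I : Submodule (MP n) (MP n)) :
    ∀ Q : MP n,
      (∀ (a : ℝ) (v : Fin n → ℝ),
        (∀ P ∈ I, (evalMP P a).mulVec v = 0) → (evalMP Q a).mulVec v = 0)
      ↔ Q ∈ rrMP I :=
  fun Q => SetLike.ext_iff.mp (eRadical_eq_rrMP I) Q

/-- Nullstellensatz for `M_n(ℝ[t])`: for every left ideal `I`, the `E`-radical
`√E(I) = {Q : Q(a)v = 0 whenever P(a)v = 0 for all P ∈ I}` equals the real radical. -/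
theorem stmt19 (n : ℕ) (hn : 1 ≤ n) (I : Submodule (MP n) (MP n)) :
    ∀ Q : MP n,
      (∀ (a : ℝ) (v : Fin n → ℝ),
        (∀ P ∈ I, (evalMP P a).mulVec v = 0) → (evalMP Q a).mulVec v = 0)
      ↔ Q ∈ rrMP I :=
  stmt19_general n I

end
end
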